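/- arXiv:math/0204101 — 9 statements merged into one kernel-verified Lean document; each statement's English description precedes it below -/
import Mathlib

section
/- Let ⪯ be a preorder on a real convex cone X in a topological real vector space E (X carrying the induced topology). Then the following are equivalent: (1) there exists a nonnegative, sublinear and continuous order-preserving function u : X → ℝ for ⪯; (2) there exists a homogeneous and subadditive countable decreasing scale G = {G_r : r ∈ ℚ⁺⁺} in (X, τ_X, ⪯) such that for every x, y ∈ X with x ≺ y there exist r₁, r₂ ∈ ℚ⁺⁺ with r₁ < r₂, x ∈ G_{r₁}, and y ∉ G_{r₂}. -/
/-- Theorem 1: Let `⪯` be a preorder on a real convex cone `X` in a topological real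
vector space `E`.  There exists a nonnegative, sublinear and continuous order-preserving
function for `⪯` iff there exists a homogeneous and subadditive countable decreasing
scale `{G r : r ∈ ℚ⁺⁺}` in `(X, τ_X, ⪯)` such that for all `x ≺ y` there are
`r₁ < r₂` in `ℚ⁺⁺` with `x ∈ G r₁` and `y ∉ G r₂`. -/
theorem sublinear_continuous_order_preserving_iff_decreasing_scale
    {E : Type*} [AddCommGroup E] [Module ℝ E] [TopologicalSpace E]
    [IsTopologicalAddGroup E] [ContinuousSMul ℝ E]
    (X : Set E)
    (hcone : ∀ x ∈ X, ∀ t : ℝ, 0 < t → t • x ∈ X)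
    (hconv : ∀ x ∈ X, ∀ y ∈ X, x + y ∈ X)
    (pre : E → E → Prop)
    (hrefl : ∀ x ∈ X, pre x x)
    (htrans : ∀ x ∈ X, ∀ y ∈ X, ∀ z ∈ X, pre x y → pre y z → pre x z) :
    (∃ u : E → ℝ,
      (∀ x ∈ X, 0 ≤ u x) ∧
      (∀ x ∈ X, ∀ t : ℝ, 0 < t → u (t • x) = t * u x) ∧
      (∀ x ∈ X, ∀ y ∈ X, u (x + y) ≤ u x + u y) ∧
      ContinuousOn u X ∧
      (∀ x ∈ X, ∀ y ∈ X, pre x y → u x ≤ u y) ∧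
      (∀ x ∈ X, ∀ y ∈ X, pre x y → ¬ pre y x → u x < u y)) ↔
    (∃ G : ℚ → Set E,
      -- each `G r` is an open decreasing subset of `X` (open in the induced topology)
      (∀ r : ℚ, 0 < r → G r ⊆ X) ∧
      (∀ r : ℚ, 0 < r → ∃ V : Set E, IsOpen V ∧ G r = V ∩ X) ∧
      (∀ r : ℚ, 0 < r → ∀ x ∈ G r, ∀ y ∈ X, pre y x → y ∈ G r) ∧
      -- closure (in the induced topology) of `G r₁` is contained in `G r₂` for `r₁ < r₂`
      (∀ r₁ r₂ : ℚ, 0 < r₁ → r₁ < r₂ → closure (G r₁) ∩ X ⊆ G r₂) ∧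
      -- the union of the scale is `X`
      ((⋃ r : ℚ, ⋃ _ : 0 < r, G r) = X) ∧
      -- homogeneous: `q • G r = G (q * r)`
      (∀ q r : ℚ, 0 < q → 0 < r → (fun x => (q : ℝ) • x) '' G r = G (q * r)) ∧
      -- subadditive: `G q + G r ⊆ G (q + r)`
      (∀ q r : ℚ, 0 < q → 0 < r → ∀ x ∈ G q, ∀ y ∈ G r, x + y ∈ G (q + r)) ∧
      -- separation of the strict part
      (∀ x ∈ X, ∀ y ∈ X, pre x y → ¬ pre y x →
        ∃ r₁ r₂ : ℚ, 0 < r₁ ∧ r₁ < r₂ ∧ x ∈ G r₁ ∧ y ∉ G r₂)) := by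
  constructor
  · rintro ⟨u, hnn, hhom, hsub, hcont, hinc, hstr⟩
    refine ⟨fun r => u ⁻¹' Set.Iio (r : ℝ) ∩ X, ?_, ?_, ?_, ?_, ?_, ?_, ?_, ?_⟩
    · intro r _; exact Set.inter_subset_right
    · intro r _
      obtain ⟨V, hV, hVeq⟩ := (continuousOn_iff'.1 hcont) (Set.Iio (r : ℝ)) isOpen_Iio
      exact ⟨V, hV, hVeq⟩
    · rintro r _ x ⟨hxr, hxX⟩ y hyX hyx
      exact ⟨lt_of_le_of_lt (hinc y hyX x hxX hyx) hxr, hyX⟩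
    · rintro r₁ r₂ _ hr x ⟨hxc, hxX⟩
      have hcw : ContinuousWithinAt u (u ⁻¹' Set.Iio (r₁ : ℝ) ∩ X) x :=
        (hcont x hxX).mono Set.inter_subset_right
      have := hcw.mem_closure_image hxc
      have him : u '' (u ⁻¹' Set.Iio (r₁ : ℝ) ∩ X) ⊆ Set.Iio (r₁ : ℝ) := by
        rintro _ ⟨z, ⟨hz, _⟩, rfl⟩; exact hz
      have hle : u x ≤ (r₁ : ℝ) := by
        have := closure_mono him this
        rw [closure_Iio] at this
        exact this
      refine ⟨lt_of_le_of_lt hle ?_, hxX⟩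
      exact_mod_cast hr
    · ext x
      simp only [Set.mem_iUnion, Set.mem_inter_iff, Set.mem_preimage, Set.mem_Iio]
      constructor
      · rintro ⟨r, _, _, hx⟩; exact hx
      · intro hx
        obtain ⟨r, hr⟩ := exists_rat_gt (u x)
        have hr0 : (0 : ℚ) < r := by
          have := hnn x hx
          exact_mod_cast lt_of_le_of_lt this hr
        exact ⟨r, hr0, hr, hx⟩
    · intro q r hq hr
      ext y
      constructor
      · rintro ⟨z, ⟨hz, hzX⟩, rfl⟩
        refine ⟨?_, hcone z hzX q (by exact_mod_cast hq)⟩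
        simp only [Set.mem_preimage, Set.mem_Iio]
        rw [hhom z hzX q (by exact_mod_cast hq)]
        push_cast
        exact mul_lt_mul_of_pos_left hz (by exact_mod_cast hq)
      · rintro ⟨hy, hyX⟩
        have hq0 : (0 : ℝ) < (q : ℝ) := by exact_mod_cast hq
        refine ⟨(q : ℝ)⁻¹ • y, ⟨?_, hcone y hyX _ (by positivity)⟩, ?_⟩
        · simp only [Set.mem_preimage, Set.mem_Iio]
          rw [hhom y hyX _ (by positivity)]
          simp only [Set.mem_preimage, Set.mem_Iio] at hy
          push_cast at hy
          rw [inv_mul_lt_iff₀ hq0]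
          linarith [hy]
        · show (q : ℝ) • ((q : ℝ)⁻¹ • y) = y
          rw [smul_smul, mul_inv_cancel₀ (ne_of_gt hq0), one_smul]
    · rintro q r hq hr x ⟨hx, hxX⟩ y ⟨hy, hyX⟩
      refine ⟨?_, hconv x hxX y hyX⟩
      simp only [Set.mem_preimage, Set.mem_Iio] at *
      push_cast
      calc u (x + y) ≤ u x + u y := hsub x hxX y hyX
        _ < q + r := by exact add_lt_add hx hy
    · intro x hx y hy hxy hyx
      have h := hstr x hx y hy hxy hyx
      obtain ⟨r₁, hr₁, hr₁'⟩ := exists_rat_btwn h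
      obtain ⟨r₂, hr₂, hr₂'⟩ := exists_rat_btwn hr₁'
      refine ⟨r₁, r₂, ?_, by exact_mod_cast hr₂, ⟨hr₁, hx⟩, ?_⟩
      · exact_mod_cast lt_of_le_of_lt (hnn x hx) hr₁
      · rintro ⟨h', _⟩
        simp only [Set.mem_preimage, Set.mem_Iio] at h'
        exact absurd (lt_trans h' hr₂') (lt_irrefl _)
  · rintro ⟨G, hsubX, hopen, hdec, hcl, hunion, hhomog, hsubadd, hsep⟩
    -- monotonicity of the scale
    have hmonoG : ∀ r₁ r₂ : ℚ, 0 < r₁ → r₁ < r₂ → G r₁ ⊆ G r₂ := by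
      intro r₁ r₂ h1 h12 x hx
      exact hcl r₁ r₂ h1 h12 ⟨subset_closure hx, hsubX r₁ h1 hx⟩
    set S : E → Set ℝ := fun x => {y | ∃ q : ℚ, 0 < q ∧ (q : ℝ) = y ∧ x ∈ G q} with hS
    set u : E → ℝ := fun x => sInf (S x) with hu
    have hSnn : ∀ x, ∀ y ∈ S x, (0 : ℝ) ≤ y := by
      rintro x y ⟨q, hq, rfl, _⟩; exact_mod_cast hq.le
    have hbdd : ∀ x, BddBelow (S x) := fun x => ⟨0, fun y hy => hSnn x y hy⟩
    have hSne : ∀ x ∈ X, (S x).Nonempty := by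
      intro x hx
      rw [← hunion] at hx
      simp only [Set.mem_iUnion] at hx
      obtain ⟨r, hr, hxr⟩ := hx
      exact ⟨(r : ℝ), r, hr, rfl, hxr⟩
    have hu_le : ∀ x, ∀ q : ℚ, 0 < q → x ∈ G q → u x ≤ (q : ℝ) := by
      intro x q hq hxq
      exact csInf_le (hbdd x) ⟨q, hq, rfl, hxq⟩
    have hmem : ∀ x ∈ X, ∀ q : ℚ, 0 < q → u x < (q : ℝ) → x ∈ G q := by
      intro x hx q hq hlt
      obtain ⟨y, ⟨q', hq', rfl, hxq'⟩, hyq⟩ := exists_lt_of_csInf_lt (hSne x hx) hlt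
      have : q' < q := by exact_mod_cast hyq
      exact hmonoG q' q hq' this hxq'
    have hnotmem : ∀ x ∈ X, ∀ q : ℚ, 0 < q → x ∉ G q → (q : ℝ) ≤ u x := by
      intro x hx q hq hxq
      by_contra h
      exact hxq (hmem x hx q hq (lt_of_not_ge h))
    have hnn : ∀ x ∈ X, 0 ≤ u x := by
      intro x hx
      exact le_csInf (hSne x hx) (hSnn x)
    -- increasing
    have hinc : ∀ x ∈ X, ∀ y ∈ X, pre x y → u x ≤ u y := by
      intro x hx y hy hxy
      refine csInf_le_csInf (hbdd x) (hSne y hy) ?_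
      rintro z ⟨q, hq, rfl, hyq⟩
      exact ⟨q, hq, rfl, hdec q hq y hyq x hx hxy⟩
    -- subadditivity
    have hsub : ∀ x ∈ X, ∀ y ∈ X, u (x + y) ≤ u x + u y := by
      intro x hx y hy
      refine le_of_forall_pos_le_add fun ε hε => ?_
      obtain ⟨q, hq1, hq2⟩ := exists_rat_btwn (show u x < u x + ε / 2 by linarith)
      obtain ⟨r, hr1, hr2⟩ := exists_rat_btwn (show u y < u y + ε / 2 by linarith)
      have hq0 : (0 : ℚ) < q := by exact_mod_cast lt_of_le_of_lt (hnn x hx) hq1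
      have hr0 : (0 : ℚ) < r := by exact_mod_cast lt_of_le_of_lt (hnn y hy) hr1
      have hmemq := hmem x hx q hq0 hq1
      have hmemr := hmem y hy r hr0 hr1
      have := hu_le (x + y) (q + r) (by positivity) (hsubadd q r hq0 hr0 x hmemq y hmemr)
      push_cast at this
      linarith
    -- rational homogeneity, one direction
    have hle_q : ∀ x ∈ X, ∀ q : ℚ, 0 < q → u ((q : ℝ) • x) ≤ (q : ℝ) * u x := by
      intro x hx q hq
      have hq0 : (0 : ℝ) < (q : ℝ) := by exact_mod_cast hq
      refine le_of_forall_pos_le_add fun ε hε => ?_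
      obtain ⟨r, hr1, hr2⟩ := exists_rat_btwn
        (show u x < u x + ε / (q : ℝ) by have := div_pos hε hq0; linarith)
      have hr0 : (0 : ℚ) < r := by exact_mod_cast lt_of_le_of_lt (hnn x hx) hr1
      have hxr := hmem x hx r hr0 hr1
      have hmem' : (q : ℝ) • x ∈ G (q * r) := by
        rw [← hhomog q r hq hr0]
        exact ⟨x, hxr, rfl⟩
      have := hu_le _ (q * r) (by positivity) hmem'
      push_cast at this
      have h2 : (q : ℝ) * (r : ℝ) < (q : ℝ) * (u x + ε / (q : ℝ)) :=
        mul_lt_mul_of_pos_left hr2 hq0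
      rw [mul_add, mul_div_cancel₀ _ (ne_of_gt hq0)] at h2
      linarith
    have hq_hom : ∀ x ∈ X, ∀ q : ℚ, 0 < q → u ((q : ℝ) • x) = (q : ℝ) * u x := by
      intro x hx q hq
      have hq0 : (0 : ℝ) < (q : ℝ) := by exact_mod_cast hq
      refine le_antisymm (hle_q x hx q hq) ?_
      have hxq : (q : ℝ) • x ∈ X := hcone x hx _ hq0
      have := hle_q ((q : ℝ) • x) hxq q⁻¹ (by positivity)
      rw [Rat.cast_inv, smul_smul, inv_mul_cancel₀ (ne_of_gt hq0), one_smul] at this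
      have h2 := mul_le_mul_of_nonneg_left this hq0.le
      rw [← mul_assoc, mul_inv_cancel₀ (ne_of_gt hq0), one_mul] at h2
      exact h2
    -- continuity
    have hcont : ContinuousOn u X := by
      intro x hx
      rw [ContinuousWithinAt, Metric.tendsto_nhds]
      intro ε hε
      -- upper bound neighbourhood
      obtain ⟨r, hr1, hr2⟩ := exists_rat_btwn (show u x < u x + ε by linarith)
      have hr0 : (0 : ℚ) < r := by exact_mod_cast lt_of_le_of_lt (hnn x hx) hr1
      obtain ⟨V, hV, hVeq⟩ := hopen r hr0
      have hxV : x ∈ V := by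
        have := hmem x hx r hr0 hr1
        rw [hVeq] at this; exact this.1
      -- lower bound neighbourhood
      have hlower : ∃ W : Set E, IsOpen W ∧ x ∈ W ∧ ∀ y ∈ W ∩ X, u x - ε < u y := by
        by_cases hc : u x - ε < 0
        · exact ⟨Set.univ, isOpen_univ, trivial, fun y hy => lt_of_lt_of_le hc (hnn y hy.2)⟩
        · push_neg at hc
          have hux : 0 < u x := by
            rcases lt_or_eq_of_le (hnn x hx) with h | h
            · exact h
            · exfalso; rw [← h] at hc; linarith
          have hlt : u x - ε < u x := by linarith
          obtain ⟨r₁, hr₁1, hr₁2⟩ := exists_rat_btwn hlt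
          obtain ⟨r₂, hr₂1, hr₂2⟩ := exists_rat_btwn hr₁2
          have hr₁0 : (0 : ℚ) < r₁ := by exact_mod_cast lt_of_le_of_lt hc hr₁1
          have hr₂0 : (0 : ℚ) < r₂ := by
            have h0 : (0 : ℝ) < (r₂ : ℝ) := lt_trans (by exact_mod_cast hr₁0) hr₂1
            exact_mod_cast h0
          have hxnot : x ∉ G r₂ := by
            intro hmem'
            have := hu_le x r₂ hr₂0 hmem'
            linarith
          have hxnotcl : x ∉ closure (G r₁) := by
            intro hcl'
            exact hxnot (hcl r₁ r₂ hr₁0 (by exact_mod_cast hr₂1) ⟨hcl', hx⟩)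
          refine ⟨(closure (G r₁))ᶜ, isClosed_closure.isOpen_compl, hxnotcl, ?_⟩
          rintro y ⟨hyW, hyX⟩
          have hynot : y ∉ G r₁ := fun h => hyW (subset_closure h)
          have := hnotmem y hyX r₁ hr₁0 hynot
          linarith
      obtain ⟨W, hW, hxW, hWlb⟩ := hlower
      have hmemN : V ∩ W ∈ nhdsWithin x X :=
        mem_nhdsWithin_of_mem_nhds ((hV.inter hW).mem_nhds ⟨hxV, hxW⟩)
      filter_upwards [hmemN, self_mem_nhdsWithin] with y hy hyX
      have hyG : y ∈ G r := by rw [hVeq]; exact ⟨hy.1, hyX⟩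
      have h1 : u y ≤ (r : ℝ) := hu_le y r hr0 hyG
      have h2 : u x - ε < u y := hWlb y ⟨hy.2, hyX⟩
      rw [Real.dist_eq, abs_lt]
      constructor <;> linarith
    -- real homogeneity via continuity and rational density
    have hhom : ∀ x ∈ X, ∀ t : ℝ, 0 < t → u (t • x) = t * u x := by
      intro x hx t ht
      have htx : t • x ∈ X := hcone x hx t ht
      have hcw : ContinuousWithinAt u X (t • x) := hcont _ htx
      set L : Filter ℚ := Filter.comap (fun q : ℚ => (q : ℝ)) (nhds t) with hL
      have htend : Filter.Tendsto (fun q : ℚ => (q : ℝ)) L (nhds t) := Filter.tendsto_comap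
      have hLne : L.NeBot := by
        refine Filter.comap_neBot fun U hU => ?_
        have hdense : t ∈ closure (Set.range (fun q : ℚ => (q : ℝ))) := Rat.denseRange_cast t
        rcases mem_closure_iff_nhds.1 hdense U hU with ⟨y, hyU, ⟨q, rfl⟩⟩
        exact ⟨q, hyU⟩
      have hpos : ∀ᶠ q in L, (0 : ℚ) < q := by
        have := htend.eventually (eventually_gt_nhds ht)
        filter_upwards [this] with q hq
        exact_mod_cast hq
      have hmap : Filter.Tendsto (fun q : ℚ => (q : ℝ) • x) L (nhdsWithin (t • x) X) := by
        rw [tendsto_nhdsWithin_iff]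
        refine ⟨htend.smul_const x, ?_⟩
        filter_upwards [hpos] with q hq
        exact hcone x hx _ (by exact_mod_cast hq)
      have h1 : Filter.Tendsto (fun q : ℚ => u ((q : ℝ) • x)) L (nhds (u (t • x))) :=
        hcw.tendsto.comp hmap
      have h2 : Filter.Tendsto (fun q : ℚ => (q : ℝ) * u x) L (nhds (t * u x)) :=
        htend.mul_const _
      have heq : (fun q : ℚ => u ((q : ℝ) • x)) =ᶠ[L] fun q : ℚ => (q : ℝ) * u x := by
        filter_upwards [hpos] with q hq
        exact hq_hom x hx q hq
      exact tendsto_nhds_unique (h1.congr' heq) h2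
    -- strict monotonicity
    have hstr : ∀ x ∈ X, ∀ y ∈ X, pre x y → ¬ pre y x → u x < u y := by
      intro x hx y hy hxy hyx
      obtain ⟨r₁, r₂, hr₁, hr₁₂, hxr₁, hyr₂⟩ := hsep x hx y hy hxy hyx
      have hr₂ : (0 : ℚ) < r₂ := lt_trans hr₁ hr₁₂
      calc u x ≤ (r₁ : ℝ) := hu_le x r₁ hr₁ hxr₁
        _ < (r₂ : ℝ) := by exact_mod_cast hr₁₂
        _ ≤ u y := hnotmem y hy r₂ hr₂ hyr₂
    exact ⟨u, hnn, hhom, hsub, hcont, hinc, hstr⟩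
end

section
/- Let ⪯ be a preorder on a real convex cone X in a topological real vector space E, and suppose u : X → ℝ is a nonnegative, sublinear and continuous order-preserving function for ⪯. Then the family G_r := u⁻¹([0, r)) (r ∈ ℚ⁺⁺) is a homogeneous and subadditive countable decreasing scale in (X, τ_X, ⪯), and for every x, y ∈ X with x ≺ y there exist r₁, r₂ ∈ ℚ⁺⁺ with r₁ < r₂, x ∈ G_{r₁}, and y ∉ G_{r₂}. -/
/-- If `u` is a nonnegative, sublinear and continuous order-preserving function for a
preorder `⪯` on a real convex cone `X` in a topological real vector space, then
`G r := u⁻¹([0, r))` (`r ∈ ℚ⁺⁺`) is a homogeneous and subadditive countable decreasing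
scale in `(X, τ_X, ⪯)` separating the strict part of `⪯`. -/
theorem decreasing_scale_of_sublinear_continuous_order_preserving
    {E : Type*} [AddCommGroup E] [Module ℝ E] [TopologicalSpace E]
    [IsTopologicalAddGroup E] [ContinuousSMul ℝ E]
    (X : Set E)
    (hcone : ∀ x ∈ X, ∀ t : ℝ, 0 < t → t • x ∈ X)
    (hconv : ∀ x ∈ X, ∀ y ∈ X, x + y ∈ X)
    (pre : E → E → Prop)
    (hrefl : ∀ x ∈ X, pre x x)
    (htrans : ∀ x ∈ X, ∀ y ∈ X, ∀ z ∈ X, pre x y → pre y z → pre x z)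
    (u : E → ℝ)
    (hnonneg : ∀ x ∈ X, 0 ≤ u x)
    (hhomog : ∀ x ∈ X, ∀ t : ℝ, 0 < t → u (t • x) = t * u x)
    (hsubadd : ∀ x ∈ X, ∀ y ∈ X, u (x + y) ≤ u x + u y)
    (hcont : ContinuousOn u X)
    (hincr : ∀ x ∈ X, ∀ y ∈ X, pre x y → u x ≤ u y)
    (hstrict : ∀ x ∈ X, ∀ y ∈ X, pre x y → ¬ pre y x → u x < u y)
    (G : ℚ → Set E)
    (hG : ∀ r : ℚ, G r = {x ∈ X | u x ∈ Set.Ico (0 : ℝ) (r : ℝ)}) :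
    (∀ r : ℚ, 0 < r → G r ⊆ X) ∧
    (∀ r : ℚ, 0 < r → ∃ V : Set E, IsOpen V ∧ G r = V ∩ X) ∧
    (∀ r : ℚ, 0 < r → ∀ x ∈ G r, ∀ y ∈ X, pre y x → y ∈ G r) ∧
    (∀ r₁ r₂ : ℚ, 0 < r₁ → r₁ < r₂ → closure (G r₁) ∩ X ⊆ G r₂) ∧
    ((⋃ r : ℚ, ⋃ _ : 0 < r, G r) = X) ∧
    (∀ q r : ℚ, 0 < q → 0 < r → (fun x => (q : ℝ) • x) '' G r = G (q * r)) ∧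
    (∀ q r : ℚ, 0 < q → 0 < r → ∀ x ∈ G q, ∀ y ∈ G r, x + y ∈ G (q + r)) ∧
    (∀ x ∈ X, ∀ y ∈ X, pre x y → ¬ pre y x →
      ∃ r₁ r₂ : ℚ, 0 < r₁ ∧ r₁ < r₂ ∧ x ∈ G r₁ ∧ y ∉ G r₂) := by
  have hmem : ∀ r : ℚ, ∀ x, x ∈ G r ↔ x ∈ X ∧ 0 ≤ u x ∧ u x < (r : ℝ) := by
    intro r x
    rw [hG r]
    constructor
    · rintro ⟨h1, h2, h3⟩; exact ⟨h1, h2, h3⟩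
    · rintro ⟨h1, h2, h3⟩; exact ⟨h1, h2, h3⟩
  refine ⟨?_, ?_, ?_, ?_, ?_, ?_, ?_, ?_⟩
  · intro r _ x hx; exact ((hmem r x).1 hx).1
  · intro r _
    obtain ⟨V, hV, hVeq⟩ := (continuousOn_iff'.1 hcont) (Set.Iio (r : ℝ)) isOpen_Iio
    refine ⟨V, hV, ?_⟩
    rw [← hVeq]
    ext x
    simp only [hmem, Set.mem_inter_iff, Set.mem_preimage, Set.mem_Iio]
    constructor
    · rintro ⟨h1, h2, h3⟩; exact ⟨h3, h1⟩
    · rintro ⟨h3, h1⟩; exact ⟨h1, hnonneg x h1, h3⟩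
  · intro r _ x hx y hy hpre
    obtain ⟨hxX, _, hxr⟩ := (hmem r x).1 hx
    exact (hmem r y).2 ⟨hy, hnonneg y hy, lt_of_le_of_lt (hincr y hy x hxX hpre) hxr⟩
  · intro r₁ r₂ hr₁ hlt x hx
    obtain ⟨hcl, hxX⟩ := hx
    have hsub : G r₁ ⊆ X := fun z hz => ((hmem r₁ z).1 hz).1
    have hcw : ContinuousWithinAt u (G r₁) x :=
      ((hcont x hxX).mono hsub)
    have himg : u x ∈ closure (u '' G r₁) := hcw.mem_closure_image hcl
    have : u '' G r₁ ⊆ Set.Iic (r₁ : ℝ) := by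
      rintro _ ⟨z, hz, rfl⟩
      exact le_of_lt ((hmem r₁ z).1 hz).2.2
    have hle : u x ≤ (r₁ : ℝ) := by
      have := closure_mono this himg
      rwa [closure_Iic, Set.mem_Iic] at this
    refine (hmem r₂ x).2 ⟨hxX, hnonneg x hxX, lt_of_le_of_lt hle ?_⟩
    exact_mod_cast hlt
  · ext x
    simp only [Set.mem_iUnion]
    constructor
    · rintro ⟨r, hr, hx⟩; exact ((hmem r x).1 hx).1
    · intro hx
      obtain ⟨r, hr⟩ := exists_rat_gt (u x)
      have h0 : (0 : ℝ) < r := lt_of_le_of_lt (hnonneg x hx) hr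
      exact ⟨r, by exact_mod_cast h0, (hmem r x).2 ⟨hx, hnonneg x hx, hr⟩⟩
  · intro q r hq hr
    have hq' : (0 : ℝ) < (q : ℝ) := by exact_mod_cast hq
    ext y
    simp only [Set.mem_image]
    constructor
    · rintro ⟨x, hx, rfl⟩
      obtain ⟨hxX, hx0, hxr⟩ := (hmem r x).1 hx
      refine (hmem (q * r) _).2 ⟨hcone x hxX _ hq', ?_, ?_⟩
      · rw [hhomog x hxX _ hq']; positivity
      · rw [hhomog x hxX _ hq']
        push_cast
        exact (mul_lt_mul_iff_right₀ hq').2 hxr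
    · intro hy
      obtain ⟨hyX, hy0, hyr⟩ := (hmem (q * r) y).1 hy
      have hqi : (0 : ℝ) < (q : ℝ)⁻¹ := by positivity
      refine ⟨(q : ℝ)⁻¹ • y, ?_, ?_⟩
      · refine (hmem r _).2 ⟨hcone y hyX _ hqi, ?_, ?_⟩
        · rw [hhomog y hyX _ hqi]; positivity
        · rw [hhomog y hyX _ hqi]
          rw [inv_mul_lt_iff₀ hq']
          push_cast at hyr ⊢
          linarith
      · rw [smul_smul, mul_inv_cancel₀ (ne_of_gt hq'), one_smul]
  · intro q r hq hr x hx y hy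
    obtain ⟨hxX, hx0, hxq⟩ := (hmem q x).1 hx
    obtain ⟨hyX, hy0, hyr⟩ := (hmem r y).1 hy
    refine (hmem (q + r) _).2 ⟨hconv x hxX y hyX, hnonneg _ (hconv x hxX y hyX), ?_⟩
    calc u (x + y) ≤ u x + u y := hsubadd x hxX y hyX
    _ < (q : ℝ) + r := by linarith
    _ = ((q + r : ℚ) : ℝ) := by push_cast; ring
  · intro x hx y hy hpre hnpre
    have hlt := hstrict x hx y hy hpre hnpre
    obtain ⟨r₂, hr₂a, hr₂b⟩ := exists_rat_btwn hlt
    obtain ⟨r₁, hr₁a, hr₁b⟩ := exists_rat_btwn hr₂a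
    refine ⟨r₁, r₂, ?_, by exact_mod_cast hr₁b, ?_, ?_⟩
    · exact_mod_cast lt_of_le_of_lt (hnonneg x hx) hr₁a
    · exact (hmem r₁ x).2 ⟨hx, hnonneg x hx, hr₁a⟩
    · intro hyG
      exact absurd ((hmem r₂ y).1 hyG).2.2 (not_lt.2 (le_of_lt hr₂b))
end

section
/- Let ⪯ be a preorder on a real convex cone X in a topological real vector space E, and let G = {G_r : r ∈ ℚ⁺⁺} be a homogeneous and subadditive countable decreasing scale in (X, τ_X, ⪯) such that for every x, y ∈ X with x ≺ y there exist r₁, r₂ ∈ ℚ⁺⁺ with r₁ < r₂, x ∈ G_{r₁}, and y ∉ G_{r₂}. Then the function u(x) := inf{r ∈ ℚ⁺⁺ : x ∈ G_r} is a nonnegative, sublinear and continuous order-preserving function for ⪯. -/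
open Filter Topology

/-- If `{G r : r ∈ ℚ⁺⁺}` is a homogeneous and subadditive countable decreasing scale in
`(X, τ_X, ⪯)` separating the strict part of the preorder `⪯` on the real convex cone `X`,
then `u x := inf {r ∈ ℚ⁺⁺ : x ∈ G r}` is a nonnegative, sublinear and continuous
order-preserving function for `⪯`. -/
theorem sublinear_continuous_order_preserving_of_decreasing_scale
    {E : Type*} [AddCommGroup E] [Module ℝ E] [TopologicalSpace E]
    [IsTopologicalAddGroup E] [ContinuousSMul ℝ E]
    (X : Set E)
    (hcone : ∀ x ∈ X, ∀ t : ℝ, 0 < t → t • x ∈ X)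
    (hconv : ∀ x ∈ X, ∀ y ∈ X, x + y ∈ X)
    (pre : E → E → Prop)
    (hrefl : ∀ x ∈ X, pre x x)
    (htrans : ∀ x ∈ X, ∀ y ∈ X, ∀ z ∈ X, pre x y → pre y z → pre x z)
    (G : ℚ → Set E)
    (hGsub : ∀ r : ℚ, 0 < r → G r ⊆ X)
    (hGopen : ∀ r : ℚ, 0 < r → ∃ V : Set E, IsOpen V ∧ G r = V ∩ X)
    (hGdecr : ∀ r : ℚ, 0 < r → ∀ x ∈ G r, ∀ y ∈ X, pre y x → y ∈ G r)
    (hGcl : ∀ r₁ r₂ : ℚ, 0 < r₁ → r₁ < r₂ → closure (G r₁) ∩ X ⊆ G r₂)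
    (hGunion : (⋃ r : ℚ, ⋃ _ : 0 < r, G r) = X)
    (hGhomog : ∀ q r : ℚ, 0 < q → 0 < r → (fun x => (q : ℝ) • x) '' G r = G (q * r))
    (hGsubadd : ∀ q r : ℚ, 0 < q → 0 < r → ∀ x ∈ G q, ∀ y ∈ G r, x + y ∈ G (q + r))
    (hGsep : ∀ x ∈ X, ∀ y ∈ X, pre x y → ¬ pre y x →
      ∃ r₁ r₂ : ℚ, 0 < r₁ ∧ r₁ < r₂ ∧ x ∈ G r₁ ∧ y ∉ G r₂)
    (u : E → ℝ)
    (hu : ∀ x, u x = sInf {t : ℝ | ∃ r : ℚ, 0 < r ∧ x ∈ G r ∧ t = (r : ℝ)}) :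
    (∀ x ∈ X, 0 ≤ u x) ∧
    (∀ x ∈ X, ∀ t : ℝ, 0 < t → u (t • x) = t * u x) ∧
    (∀ x ∈ X, ∀ y ∈ X, u (x + y) ≤ u x + u y) ∧
    ContinuousOn u X ∧
    (∀ x ∈ X, ∀ y ∈ X, pre x y → u x ≤ u y) ∧
    (∀ x ∈ X, ∀ y ∈ X, pre x y → ¬ pre y x → u x < u y) := by
  classical
  set S : E → Set ℝ := fun x => {t : ℝ | ∃ r : ℚ, 0 < r ∧ x ∈ G r ∧ t = (r : ℝ)} with hS
  have huS : ∀ x, u x = sInf (S x) := hu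
  have hbdd : ∀ x, BddBelow (S x) := by
    intro x
    refine ⟨0, ?_⟩
    rintro t ⟨r, hr, -, rfl⟩
    exact_mod_cast hr.le
  have hne : ∀ x ∈ X, (S x).Nonempty := by
    intro x hx
    have : x ∈ ⋃ r : ℚ, ⋃ _ : 0 < r, G r := hGunion ▸ hx
    simp only [Set.mem_iUnion] at this
    obtain ⟨r, hr, hxr⟩ := this
    exact ⟨(r : ℝ), r, hr, hxr, rfl⟩
  -- monotonicity of the scale
  have hGmono : ∀ r₁ r₂ : ℚ, 0 < r₁ → r₁ ≤ r₂ → G r₁ ⊆ G r₂ := by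
    intro r₁ r₂ h1 h12 x hx
    rcases eq_or_lt_of_le h12 with rfl | hlt
    · exact hx
    · exact hGcl r₁ r₂ h1 hlt ⟨subset_closure hx, hGsub r₁ h1 hx⟩
  have hle : ∀ (x : E) (r : ℚ), 0 < r → x ∈ G r → u x ≤ (r : ℝ) := by
    intro x r hr hxr
    rw [huS]
    exact csInf_le (hbdd x) ⟨r, hr, hxr, rfl⟩
  have hmem : ∀ x ∈ X, ∀ q : ℚ, 0 < q → u x < (q : ℝ) → x ∈ G q := by
    intro x hx q hq hlt
    rw [huS] at hlt
    obtain ⟨t, ht, htq⟩ := exists_lt_of_csInf_lt (hne x hx) hlt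
    obtain ⟨r, hr, hxr, rfl⟩ := ht
    have : r ≤ q := by exact_mod_cast htq.le
    exact hGmono r q hr this hxr
  have hnonneg : ∀ x ∈ X, 0 ≤ u x := by
    intro x hx
    rw [huS]
    refine le_csInf (hne x hx) ?_
    rintro t ⟨r, hr, -, rfl⟩
    exact_mod_cast hr.le
  have hge : ∀ x ∈ X, ∀ q : ℚ, 0 < q → x ∉ G q → (q : ℝ) ≤ u x := by
    intro x hx q hq hnot
    by_contra h
    exact hnot (hmem x hx q hq (lt_of_not_ge h))
  -- monotone
  have hmono : ∀ x ∈ X, ∀ y ∈ X, pre x y → u x ≤ u y := by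
    intro x hx y hy hxy
    rw [huS, huS]
    refine csInf_le_csInf (hbdd x) (hne y hy) ?_
    rintro t ⟨r, hr, hyr, rfl⟩
    exact ⟨r, hr, hGdecr r hr y hyr x hx hxy, rfl⟩
  -- strict
  have hstrict : ∀ x ∈ X, ∀ y ∈ X, pre x y → ¬ pre y x → u x < u y := by
    intro x hx y hy hxy hnyx
    obtain ⟨r₁, r₂, hr₁, h12, hx1, hy2⟩ := hGsep x hx y hy hxy hnyx
    have h1 : u x ≤ (r₁ : ℝ) := hle x r₁ hr₁ hx1
    have h2 : (r₂ : ℝ) ≤ u y := hge y hy r₂ (hr₁.trans h12) hy2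
    calc u x ≤ (r₁ : ℝ) := h1
      _ < (r₂ : ℝ) := by exact_mod_cast h12
      _ ≤ u y := h2
  -- subadditive
  have hsubadd : ∀ x ∈ X, ∀ y ∈ X, u (x + y) ≤ u x + u y := by
    intro x hx y hy
    refine le_of_forall_pos_le_add ?_
    intro ε hε
    obtain ⟨q, hq1, hq2⟩ := exists_rat_btwn (lt_add_of_pos_right (u x) (half_pos hε))
    obtain ⟨r, hr1, hr2⟩ := exists_rat_btwn (lt_add_of_pos_right (u y) (half_pos hε))
    have hq0 : 0 < q := by exact_mod_cast (hnonneg x hx).trans_lt hq1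
    have hr0 : 0 < r := by exact_mod_cast (hnonneg y hy).trans_lt hr1
    have hxq : x ∈ G q := hmem x hx q hq0 hq1
    have hyr : y ∈ G r := hmem y hy r hr0 hr1
    have hxy : x + y ∈ G (q + r) := hGsubadd q r hq0 hr0 x hxq y hyr
    have := hle (x + y) (q + r) (add_pos hq0 hr0) hxy
    push_cast at this
    linarith
  -- scaling inequality
  have hscale_le : ∀ x ∈ X, ∀ t : ℝ, 0 < t → u (t • x) ≤ t * u x := by
    intro x hx t ht
    -- first: for any rational r with x ∈ G r and rational s with t*r < s, t•x ∈ G s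
    have key : ∀ r : ℚ, 0 < r → x ∈ G r → ∀ s : ℚ, t * r < (s : ℝ) → t • x ∈ G s := by
      intro r hr hxr s hs
      obtain ⟨s₁, hs₁a, hs₁b⟩ := exists_rat_btwn hs
      have hs₁pos : 0 < s₁ := by
        have h0 : (0:ℝ) < t * r := mul_pos ht (by exact_mod_cast hr)
        exact_mod_cast h0.trans hs₁a
      have htlt : t < (s₁ : ℝ) / (r : ℝ) := by
        rw [lt_div_iff₀ (by exact_mod_cast hr)]
        exact hs₁a
      -- choose rationals qₙ ∈ (t, min (t + 1/(n+1)) (s₁/r))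
      have hchoice : ∀ n : ℕ, ∃ q : ℚ, t < (q : ℝ) ∧
          (q : ℝ) < t + 1 / (n + 1) ∧ (q : ℝ) < (s₁ : ℝ) / (r : ℝ) := by
        intro n
        have hpos : (0:ℝ) < 1 / (n + 1) := by positivity
        obtain ⟨q, hq1, hq2⟩ := exists_rat_btwn
          (lt_min (lt_add_of_pos_right t hpos) htlt)
        exact ⟨q, hq1, (lt_min_iff.mp hq2).1, (lt_min_iff.mp hq2).2⟩
      choose q hq1 hq2 hq3 using hchoice
      have hqpos : ∀ n, 0 < q n := by
        intro n
        have : (0:ℝ) < q n := ht.trans (hq1 n)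
        exact_mod_cast this
      have hmemn : ∀ n, (q n : ℝ) • x ∈ G s₁ := by
        intro n
        have h1 : (q n : ℝ) • x ∈ G (q n * r) := by
          rw [← hGhomog (q n) r (hqpos n) hr]
          exact ⟨x, hxr, rfl⟩
        refine hGmono (q n * r) s₁ (mul_pos (hqpos n) hr) ?_ h1
        have : (q n : ℝ) * r < s₁ := by
          rw [← lt_div_iff₀ (by exact_mod_cast hr : (0:ℝ) < (r:ℝ))]
          exact hq3 n
        exact_mod_cast this.le
      have htend : Tendsto (fun n : ℕ => (q n : ℝ) • x) atTop (𝓝 (t • x)) := by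
        have h1 : Tendsto (fun n : ℕ => (q n : ℝ)) atTop (𝓝 t) := by
          have hub : Tendsto (fun n : ℕ => t + 1 / (n + 1 : ℝ)) atTop (𝓝 t) := by
            have := tendsto_one_div_add_atTop_nhds_zero_nat (𝕜 := ℝ)
            have h := tendsto_const_nhds (x := t) (f := atTop (α := ℕ)) |>.add this
            simpa using h
          exact tendsto_of_tendsto_of_tendsto_of_le_of_le tendsto_const_nhds hub
            (fun n => (hq1 n).le) (fun n => (hq2 n).le)
        exact h1.smul_const x
      have hcl : t • x ∈ closure (G s₁) :=
        mem_closure_of_tendsto htend (Filter.Eventually.of_forall hmemn)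
      exact hGcl s₁ s hs₁pos (by exact_mod_cast hs₁b) ⟨hcl, hcone x hx t ht⟩
    -- conclude u (t • x) ≤ t * r for any such r
    have key2 : ∀ r : ℚ, 0 < r → x ∈ G r → u (t • x) ≤ t * r := by
      intro r hr hxr
      by_contra h
      push_neg at h
      obtain ⟨s, hs1, hs2⟩ := exists_rat_btwn h
      have hspos : 0 < s := by
        have h0 : (0:ℝ) < t * r := mul_pos ht (by exact_mod_cast hr)
        exact_mod_cast h0.trans hs1
      exact absurd (hle (t • x) s hspos (key r hr hxr s hs1)) (not_le.mpr hs2)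
    have : u (t • x) / t ≤ u x := by
      rw [huS x]
      refine le_csInf (hne x hx) ?_
      rintro b ⟨r, hr, hxr, rfl⟩
      rw [div_le_iff₀ ht]
      calc u (t • x) ≤ t * r := key2 r hr hxr
        _ = (r : ℝ) * t := mul_comm _ _
    calc u (t • x) = u (t • x) / t * t := by field_simp
      _ ≤ u x * t := by exact mul_le_mul_of_nonneg_right this ht.le
      _ = t * u x := mul_comm _ _
  -- homogeneity
  have hhomog : ∀ x ∈ X, ∀ t : ℝ, 0 < t → u (t • x) = t * u x := by
    intro x hx t ht
    refine le_antisymm (hscale_le x hx t ht) ?_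
    have h2 := hscale_le (t • x) (hcone x hx t ht) t⁻¹ (inv_pos.mpr ht)
    rw [inv_smul_smul₀ ht.ne' x] at h2
    calc t * u x ≤ t * (t⁻¹ * u (t • x)) := mul_le_mul_of_nonneg_left h2 ht.le
      _ = u (t • x) := by field_simp
  -- continuity
  have hcont : ContinuousOn u X := by
    intro x hx
    rw [ContinuousWithinAt, Metric.tendsto_nhds]
    intro ε hε
    -- upper bound neighborhood
    obtain ⟨q, hq1, hq2⟩ := exists_rat_btwn (lt_add_of_pos_right (u x) hε)
    have hq0 : 0 < q := by exact_mod_cast (hnonneg x hx).trans_lt hq1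
    obtain ⟨V, hVopen, hVG⟩ := hGopen q hq0
    have hxV : x ∈ V := by
      have : x ∈ G q := hmem x hx q hq0 hq1
      rw [hVG] at this; exact this.1
    have hVmem : V ∈ 𝓝[X] x := nhdsWithin_le_nhds (hVopen.mem_nhds hxV)
    have hupper : ∀ᶠ y in 𝓝[X] x, u y < u x + ε := by
      filter_upwards [hVmem, self_mem_nhdsWithin] with y hyV hyX
      have hyG : y ∈ G q := by rw [hVG]; exact ⟨hyV, hyX⟩
      exact (hle y q hq0 hyG).trans_lt hq2
    -- lower bound neighborhood
    have hlower : ∀ᶠ y in 𝓝[X] x, u x - ε < u y := by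
      rcases lt_or_ge (u x) ε with hcase | hcase
      · filter_upwards [self_mem_nhdsWithin] with y hyX
        have := hnonneg y hyX
        linarith
      · have h1 : u x - ε < u x := by linarith
        obtain ⟨q₃, hq₃1, hq₃2⟩ := exists_rat_btwn h1
        obtain ⟨q₂, hq₂1, hq₂2⟩ := exists_rat_btwn hq₃1
        have hq₂0 : 0 < q₂ := by
          have : (0:ℝ) < q₂ := by linarith
          exact_mod_cast this
        have hq₃0 : 0 < q₃ := by
          have h23 : (q₂ : ℝ) < q₃ := hq₂2
          have : (0:ℝ) < q₃ := by
            have : (0:ℝ) < q₂ := by exact_mod_cast hq₂0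
            linarith
          exact_mod_cast this
        have hxnot3 : x ∉ G q₃ := by
          intro hmem3
          exact absurd (hle x q₃ hq₃0 hmem3) (not_le.mpr hq₃2)
        have hxnotcl : x ∉ closure (G q₂) := by
          intro hcl
          exact hxnot3 (hGcl q₂ q₃ hq₂0 (by exact_mod_cast hq₂2) ⟨hcl, hx⟩)
        have hWmem : (closure (G q₂))ᶜ ∈ 𝓝[X] x :=
          nhdsWithin_le_nhds ((isClosed_closure.isOpen_compl).mem_nhds hxnotcl)
        filter_upwards [hWmem, self_mem_nhdsWithin] with y hyW hyX
        have hynot : y ∉ G q₂ := fun h => hyW (subset_closure h)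
        have := hge y hyX q₂ hq₂0 hynot
        linarith
    filter_upwards [hupper, hlower] with y h1 h2
    rw [Real.dist_eq, abs_sub_lt_iff]
    constructor <;> linarith
  exact ⟨hnonneg, hhomog, hsubadd, hcont, hmono, hstrict⟩
end

section
/- Let ⪯ be a preorder on a topological space X and let G = {G_r : r ∈ ℚ⁺⁺} be a countable decreasing scale in (X, τ, ⪯) such that for every x, y ∈ X with x ≺ y there exist r₁, r₂ ∈ ℚ⁺⁺ with r₁ < r₂, x ∈ G_{r₁}, and y ∉ G_{r₂}. Then the function u(x) := inf{r ∈ ℚ⁺⁺ : x ∈ G_r} is an order-preserving function for ⪯, i.e., u is increasing and x ≺ y implies u(x) < u(y). -/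
/-- If `{G r : r ∈ ℚ⁺⁺}` is a countable decreasing scale in a topological preordered
space `(X, τ, ⪯)` which separates the strict part of `⪯`, then
`u x := inf {r ∈ ℚ⁺⁺ : x ∈ G r}` is an order-preserving function for `⪯`. -/
theorem decreasing_scale_inf_order_preserving
    {X : Type*} [TopologicalSpace X]
    (pre : X → X → Prop)
    (hrefl : ∀ x, pre x x)
    (htrans : ∀ x y z, pre x y → pre y z → pre x z)
    (G : ℚ → Set X)
    (hGopen : ∀ r : ℚ, 0 < r → IsOpen (G r))
    (hGdecr : ∀ r : ℚ, 0 < r → ∀ x ∈ G r, ∀ y, pre y x → y ∈ G r)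
    (hGcl : ∀ r₁ r₂ : ℚ, 0 < r₁ → r₁ < r₂ → closure (G r₁) ⊆ G r₂)
    (hGunion : (⋃ r : ℚ, ⋃ _ : 0 < r, G r) = Set.univ)
    (hGsep : ∀ x y, pre x y → ¬ pre y x →
      ∃ r₁ r₂ : ℚ, 0 < r₁ ∧ r₁ < r₂ ∧ x ∈ G r₁ ∧ y ∉ G r₂)
    (u : X → ℝ)
    (hu : ∀ x, u x = sInf {t : ℝ | ∃ r : ℚ, 0 < r ∧ x ∈ G r ∧ t = (r : ℝ)}) :
    (∀ x y, pre x y → u x ≤ u y) ∧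
    (∀ x y, pre x y → ¬ pre y x → u x < u y) := by
  set S : X → Set ℝ := fun x => {t : ℝ | ∃ r : ℚ, 0 < r ∧ x ∈ G r ∧ t = (r : ℝ)} with hS
  have hne : ∀ x, (S x).Nonempty := by
    intro x
    have : x ∈ (⋃ r : ℚ, ⋃ _ : 0 < r, G r) := by rw [hGunion]; trivial
    simp only [Set.mem_iUnion] at this
    obtain ⟨r, hr, hx⟩ := this
    exact ⟨(r : ℝ), r, hr, hx, rfl⟩
  have hbdd : ∀ x, BddBelow (S x) := by
    intro x
    refine ⟨0, fun t ht => ?_⟩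
    obtain ⟨r, hr, _, rfl⟩ := ht
    exact_mod_cast hr.le
  have hmono : ∀ x y, pre x y → u x ≤ u y := by
    intro x y hxy
    rw [hu x, hu y]
    apply csInf_le_csInf (hbdd x) (hne y)
    rintro t ⟨r, hr, hy, rfl⟩
    exact ⟨r, hr, hGdecr r hr y hy x hxy, rfl⟩
  refine ⟨hmono, fun x y hxy hnyx => ?_⟩
  obtain ⟨r₁, r₂, hr₁, hlt, hx1, hy2⟩ := hGsep x y hxy hnyx
  have h1 : u x ≤ (r₁ : ℝ) := by
    rw [hu x]; exact csInf_le (hbdd x) ⟨r₁, hr₁, hx1, rfl⟩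
  have h2 : (r₂ : ℝ) ≤ u y := by
    rw [hu y]
    apply le_csInf (hne y)
    rintro t ⟨r, hr, hy, rfl⟩
    by_contra h
    push_neg at h
    have hrr : r < r₂ := by exact_mod_cast h
    exact hy2 (hGcl r r₂ hr hrr (subset_closure hy))
  calc u x ≤ (r₁ : ℝ) := h1
    _ < (r₂ : ℝ) := by exact_mod_cast hlt
    _ ≤ u y := h2
end

section
/- Let ⪯ be a preorder on a topological space X and let G = {G_r : r ∈ ℚ⁺⁺} be a countable decreasing scale in (X, τ, ⪯). Then the function u(x) := inf{r ∈ ℚ⁺⁺ : x ∈ G_r} satisfies u(x) = inf{r ∈ ℚ⁺⁺ : x ∈ cl(G_r)} for every x ∈ X (where cl denotes topological closure), and consequently u is continuous on X. -/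
/-- If `{G r : r ∈ ℚ⁺⁺}` is a countable decreasing scale in a topological preordered
space `(X, τ, ⪯)`, then `u x := inf {r ∈ ℚ⁺⁺ : x ∈ G r}` satisfies
`u x = inf {r ∈ ℚ⁺⁺ : x ∈ cl (G r)}` for every `x`, and consequently `u` is
continuous. -/
theorem decreasing_scale_inf_continuous
    {X : Type*} [TopologicalSpace X]
    (pre : X → X → Prop)
    (hrefl : ∀ x, pre x x)
    (htrans : ∀ x y z, pre x y → pre y z → pre x z)
    (G : ℚ → Set X)
    (hGopen : ∀ r : ℚ, 0 < r → IsOpen (G r))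
    (hGdecr : ∀ r : ℚ, 0 < r → ∀ x ∈ G r, ∀ y, pre y x → y ∈ G r)
    (hGcl : ∀ r₁ r₂ : ℚ, 0 < r₁ → r₁ < r₂ → closure (G r₁) ⊆ G r₂)
    (hGunion : (⋃ r : ℚ, ⋃ _ : 0 < r, G r) = Set.univ)
    (u : X → ℝ)
    (hu : ∀ x, u x = sInf {t : ℝ | ∃ r : ℚ, 0 < r ∧ x ∈ G r ∧ t = (r : ℝ)}) :
    (∀ x, u x = sInf {t : ℝ | ∃ r : ℚ, 0 < r ∧ x ∈ closure (G r) ∧ t = (r : ℝ)}) ∧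
    Continuous u := by
  have hbdd : ∀ x : X, BddBelow {t : ℝ | ∃ r : ℚ, 0 < r ∧ x ∈ G r ∧ t = (r : ℝ)} := by
    intro x
    refine ⟨0, ?_⟩
    rintro t ⟨r, hr, -, rfl⟩
    exact_mod_cast hr.le
  have hne : ∀ x : X, ({t : ℝ | ∃ r : ℚ, 0 < r ∧ x ∈ G r ∧ t = (r : ℝ)}).Nonempty := by
    intro x
    have hx : x ∈ (⋃ r : ℚ, ⋃ _ : 0 < r, G r) := hGunion ▸ Set.mem_univ x
    simp only [Set.mem_iUnion] at hx
    obtain ⟨r, hr, hxr⟩ := hx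
    exact ⟨(r : ℝ), r, hr, hxr, rfl⟩
  have h0 : ∀ x, 0 ≤ u x := by
    intro x
    rw [hu]
    refine le_csInf (hne x) ?_
    rintro t ⟨r, hr, -, rfl⟩
    exact_mod_cast hr.le
  have h4 : ∀ x (r : ℚ), 0 < r → x ∈ G r → u x ≤ (r : ℝ) := by
    intro x r hr hx
    rw [hu]
    exact csInf_le (hbdd x) ⟨r, hr, hx, rfl⟩
  have h2 : ∀ x (r : ℚ), 0 < r → u x < (r : ℝ) → x ∈ G r := by
    intro x r hr hlt
    rw [hu] at hlt
    obtain ⟨t, ⟨s, hs, hxs, rfl⟩, hts⟩ := exists_lt_of_csInf_lt (hne x) hlt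
    have hsr : s < r := by exact_mod_cast hts
    exact hGcl s r hs hsr (subset_closure hxs)
  have h1 : ∀ x (r : ℚ), 0 < r → x ∈ closure (G r) → u x ≤ (r : ℝ) := by
    intro x r hr hx
    by_contra h
    push_neg at h
    obtain ⟨q, hq1, hq2⟩ := exists_rat_btwn h
    have hrq : r < q := by exact_mod_cast hq1
    have hq0 : 0 < q := hr.trans hrq
    have hxq : x ∈ G q := hGcl r q hr hrq hx
    exact absurd (h4 x q hq0 hxq) (not_le.mpr hq2)
  constructor
  · intro x
    apply le_antisymm
    · refine le_csInf ?_ ?_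
      · obtain ⟨t, r, hr, hxr, ht⟩ := hne x
        exact ⟨t, r, hr, subset_closure hxr, ht⟩
      · rintro t ⟨r, hr, hx, rfl⟩
        exact h1 x r hr hx
    · rw [hu]
      refine csInf_le_csInf ?_ (hne x) ?_
      · refine ⟨0, ?_⟩
        rintro t ⟨r, hr, -, rfl⟩
        exact_mod_cast hr.le
      · rintro t ⟨r, hr, hx, rfl⟩
        exact ⟨r, hr, subset_closure hx, rfl⟩
  · rw [continuous_iff_continuousAt]
    intro x
    rw [ContinuousAt, Metric.tendsto_nhds]
    intro ε hε
    -- upper bound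
    obtain ⟨q, hq1, hq2⟩ := exists_rat_btwn (lt_add_of_pos_right (u x) hε)
    have hq0 : 0 < q := by exact_mod_cast (h0 x).trans_lt hq1
    have hxq : x ∈ G q := h2 x q hq0 hq1
    have E1 : ∀ᶠ y in nhds x, u y < u x + ε :=
      ((hGopen q hq0).eventually_mem hxq).mono fun y hy =>
        lt_of_le_of_lt (h4 y q hq0 hy) hq2
    have E2 : ∀ᶠ y in nhds x, u x - ε < u y := by
      by_cases hc : u x - ε < 0
      · exact Filter.Eventually.of_forall fun y => hc.trans_le (h0 y)
      · push_neg at hc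
        obtain ⟨p, hp1, hp2⟩ := exists_rat_btwn (show u x - ε < u x by linarith)
        have hp0 : 0 < p := by exact_mod_cast hc.trans_lt hp1
        have hxp : x ∉ closure (G p) := fun h => absurd (h1 x p hp0 h) (not_le.mpr hp2)
        refine ((isClosed_closure.isOpen_compl).eventually_mem hxp).mono fun y hy => ?_
        have hpy : (p : ℝ) ≤ u y := by
          by_contra h
          push_neg at h
          exact hy (subset_closure (h2 y p hp0 h))
        linarith
    refine (E1.and E2).mono fun y ⟨hy1, hy2⟩ => ?_
    rw [Real.dist_eq, abs_sub_lt_iff]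
    constructor <;> linarith
end

section
/- Let ⪯ be a preorder on a real cone X in a topological real vector space E and let G = {G_r : r ∈ ℚ⁺⁺} be a homogeneous countable decreasing scale in (X, τ_X, ⪯). Then the function u(x) := inf{r ∈ ℚ⁺⁺ : x ∈ G_r} satisfies u(qx) = q·u(x) for every x ∈ X and every q ∈ ℚ⁺⁺, and hence (by continuity of u and of scalar multiplication) u is homogeneous of degree one: u(tx) = t·u(x) for all x ∈ X and all real t > 0. -/
/-- If `{G r : r ∈ ℚ⁺⁺}` is a homogeneous countable decreasing scale in `(X, τ_X, ⪯)`,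
where `X` is a real cone in a topological real vector space, then
`u x := inf {r ∈ ℚ⁺⁺ : x ∈ G r}` satisfies `u (q • x) = q * u x` for all `q ∈ ℚ⁺⁺`,
and hence `u` is homogeneous of degree one: `u (t • x) = t * u x` for all real `t > 0`. -/
theorem decreasing_scale_inf_homogeneous
    {E : Type*} [AddCommGroup E] [Module ℝ E] [TopologicalSpace E]
    [IsTopologicalAddGroup E] [ContinuousSMul ℝ E]
    (X : Set E)
    (hcone : ∀ x ∈ X, ∀ t : ℝ, 0 < t → t • x ∈ X)
    (pre : E → E → Prop)
    (hrefl : ∀ x ∈ X, pre x x)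
    (htrans : ∀ x ∈ X, ∀ y ∈ X, ∀ z ∈ X, pre x y → pre y z → pre x z)
    (G : ℚ → Set E)
    (hGsub : ∀ r : ℚ, 0 < r → G r ⊆ X)
    (hGopen : ∀ r : ℚ, 0 < r → ∃ V : Set E, IsOpen V ∧ G r = V ∩ X)
    (hGdecr : ∀ r : ℚ, 0 < r → ∀ x ∈ G r, ∀ y ∈ X, pre y x → y ∈ G r)
    (hGcl : ∀ r₁ r₂ : ℚ, 0 < r₁ → r₁ < r₂ → closure (G r₁) ∩ X ⊆ G r₂)
    (hGunion : (⋃ r : ℚ, ⋃ _ : 0 < r, G r) = X)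
    (hGhomog : ∀ q r : ℚ, 0 < q → 0 < r → (fun x => (q : ℝ) • x) '' G r = G (q * r))
    (u : E → ℝ)
    (hu : ∀ x, u x = sInf {t : ℝ | ∃ r : ℚ, 0 < r ∧ x ∈ G r ∧ t = (r : ℝ)}) :
    (∀ x ∈ X, ∀ q : ℚ, 0 < q → u ((q : ℝ) • x) = (q : ℝ) * u x) ∧
    (∀ x ∈ X, ∀ t : ℝ, 0 < t → u (t • x) = t * u x) := by
  -- monotonicity of the scale
  have mono : ∀ r₁ r₂ : ℚ, 0 < r₁ → r₁ < r₂ → G r₁ ⊆ G r₂ := by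
    intro r₁ r₂ h1 h12 y hy
    exact hGcl r₁ r₂ h1 h12 ⟨subset_closure hy, hGsub r₁ h1 hy⟩
  have hex : ∀ x ∈ X, ∃ r : ℚ, 0 < r ∧ x ∈ G r := by
    intro x hx
    rw [← hGunion] at hx
    simpa using hx
  set S : E → Set ℝ := fun x => {t : ℝ | ∃ r : ℚ, 0 < r ∧ x ∈ G r ∧ t = (r : ℝ)} with hS
  have hSne : ∀ x ∈ X, (S x).Nonempty := by
    intro x hx
    obtain ⟨r, hr, hxr⟩ := hex x hx
    exact ⟨(r : ℝ), r, hr, hxr, rfl⟩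
  have hSbdd : ∀ x, BddBelow (S x) := by
    intro x
    refine ⟨0, ?_⟩
    rintro t ⟨r, hr, -, rfl⟩
    exact_mod_cast hr.le
  have hub : ∀ x, ∀ r : ℚ, 0 < r → x ∈ G r → u x ≤ (r : ℝ) := by
    intro x r hr hxr
    rw [hu]
    exact csInf_le (hSbdd x) ⟨r, hr, hxr, rfl⟩
  have hnn : ∀ x ∈ X, 0 ≤ u x := by
    intro x hx
    rw [hu]
    refine le_csInf (hSne x hx) ?_
    rintro t ⟨r, hr, -, rfl⟩
    exact_mod_cast hr.le
  have hmemG : ∀ x ∈ X, ∀ r : ℚ, u x < (r : ℝ) → x ∈ G r := by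
    intro x hx r hlt
    rw [hu] at hlt
    obtain ⟨t, ⟨s, hs, hxs, rfl⟩, hlt'⟩ := exists_lt_of_csInf_lt (hSne x hx) hlt
    exact mono s r hs (by exact_mod_cast hlt') hxs
  -- key closure lemma
  have key : ∀ (y : E) (c : ℝ), 0 < c → ∀ s r' : ℚ, 0 < s → y ∈ G s →
      c * (s : ℝ) < (r' : ℝ) → c • y ∈ closure (G r') := by
    intro y c hc s r' hs hys hcs
    have hs' : (0 : ℝ) < (s : ℝ) := by exact_mod_cast hs
    rw [mem_closure_iff_nhds]
    intro U hU
    have hcont : Continuous fun a : ℝ => a • y := continuous_id.smul continuous_const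
    have hpre : (fun a : ℝ => a • y) ⁻¹' U ∈ nhds c :=
      hcont.continuousAt.preimage_mem_nhds hU
    have hIoo : Set.Ioo (0 : ℝ) ((r' : ℝ) / (s : ℝ)) ∈ nhds c :=
      Ioo_mem_nhds hc ((lt_div_iff₀ hs').2 hcs)
    obtain ⟨W, hWsub, hWopen, hcW⟩ := mem_nhds_iff.1 (Filter.inter_mem hpre hIoo)
    obtain ⟨q, hq⟩ := Rat.denseRange_cast.exists_mem_open hWopen ⟨c, hcW⟩
    obtain ⟨hqU, hq0, hqlt⟩ := hWsub hq
    have hq0' : 0 < q := by exact_mod_cast hq0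
    have hqs : q * s < r' := by
      have := (lt_div_iff₀ hs').1 hqlt
      exact_mod_cast this
    have hmem1 : (q : ℝ) • y ∈ G (q * s) := by
      rw [← hGhomog q s hq0' hs]
      exact ⟨y, hys, rfl⟩
    exact ⟨(q : ℝ) • y, hqU, mono (q * s) r' (mul_pos hq0' hs) hqs hmem1⟩
  -- claim A : above t * u x, membership holds
  have claimA : ∀ x ∈ X, ∀ t : ℝ, 0 < t → ∀ r : ℚ, 0 < r → t * u x < (r : ℝ) →
      t • x ∈ G r := by
    intro x hx t ht r hr hlt
    have h1 : u x < (r : ℝ) / t := (lt_div_iff₀' ht).2 hlt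
    obtain ⟨s, hs1, hs2⟩ := exists_rat_btwn h1
    have hs0 : 0 < s := by exact_mod_cast lt_of_le_of_lt (hnn x hx) hs1
    have h2 : t * (s : ℝ) < (r : ℝ) := (lt_div_iff₀' ht).1 hs2
    obtain ⟨r', hr'1, hr'2⟩ := exists_rat_btwn h2
    have hr'0 : 0 < r' := by
      have : (0 : ℝ) < (r' : ℝ) := lt_of_le_of_lt (by positivity) hr'1
      exact_mod_cast this
    have hxs : x ∈ G s := hmemG x hx s hs1
    have hclo : t • x ∈ closure (G r') := key x t ht s r' hs0 hxs hr'1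
    exact hGcl r' r hr'0 (by exact_mod_cast hr'2) ⟨hclo, hcone x hx t ht⟩
  -- claim B : below t * u x, no membership
  have claimB : ∀ x ∈ X, ∀ t : ℝ, 0 < t → ∀ r : ℚ, 0 < r → t • x ∈ G r →
      t * u x ≤ (r : ℝ) := by
    intro x hx t ht r hr hmem
    by_contra hcon
    push_neg at hcon
    have h1 : (r : ℝ) / t < u x := (div_lt_iff₀' ht).2 hcon
    obtain ⟨s', hs'1, hs'2⟩ := exists_rat_btwn h1
    obtain ⟨s, hs1, hs2⟩ := exists_rat_btwn hs'2
    have hr' : (0 : ℝ) < (r : ℝ) := by exact_mod_cast hr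
    have hs'0 : 0 < s' := by
      have : (0 : ℝ) < (s' : ℝ) := lt_of_le_of_lt (by positivity) hs'1
      exact_mod_cast this
    have hkey : t⁻¹ * (r : ℝ) < (s' : ℝ) := by
      rw [inv_mul_eq_div]; exact hs'1
    have hclo : t⁻¹ • (t • x) ∈ closure (G s') :=
      key (t • x) t⁻¹ (inv_pos.2 ht) r s' hr hmem hkey
    rw [smul_smul, inv_mul_cancel₀ ht.ne', one_smul] at hclo
    have hxGs : x ∈ G s := hGcl s' s hs'0 (by exact_mod_cast hs1) ⟨hclo, hx⟩
    have hs0 : 0 < s := lt_trans hs'0 (by exact_mod_cast hs1)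
    exact absurd (lt_of_le_of_lt (hub x s hs0 hxGs) hs2) (lt_irrefl _)
  -- main real case
  have main : ∀ x ∈ X, ∀ t : ℝ, 0 < t → u (t • x) = t * u x := by
    intro x hx t ht
    have htx : t • x ∈ X := hcone x hx t ht
    refine le_antisymm ?_ ?_
    · by_contra hcon
      push_neg at hcon
      obtain ⟨r, hr1, hr2⟩ := exists_rat_btwn hcon
      have hr0 : 0 < r := by
        have h0 : (0 : ℝ) < (r : ℝ) :=
          lt_of_le_of_lt (mul_nonneg ht.le (hnn x hx)) hr1
        exact_mod_cast h0
      have := hub (t • x) r hr0 (claimA x hx t ht r hr0 hr1)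
      exact absurd (lt_of_le_of_lt this hr2) (lt_irrefl _)
    · rw [hu (t • x)]
      refine le_csInf (hSne (t • x) htx) ?_
      rintro w ⟨r, hr, hmem, rfl⟩
      exact claimB x hx t ht r hr hmem
  exact ⟨fun x hx q hq => main x hx (q : ℝ) (by exact_mod_cast hq), main⟩
end

section
/- Let ⪯ be a complete preorder on a real convex cone X in a topological real vector space E with X₀ and X₊ nonempty and X₋ empty, and suppose u : X → ℝ is a nonnegative, sublinear and continuous order-preserving function for ⪯. Then: (a) ⪯ is homothetic; (b) ⪯ is continuous; (c) u(x₊) > 0 for every x₊ ∈ X₊, and for every x₊ ∈ X₊ the set {q·x₊ : q ∈ ℚ⁺⁺} is order-dense in (X₊, ⪯); (d) x ~ y for every x, y ∈ X₀; (e) x ≺ x₊ for every x ∈ X₀, x₊ ∈ X₊; (f) x + y ≺ (q + r)·x₊ whenever x ≺ q·x₊ and y ≺ r·x₊ with q, r ∈ ℚ⁺⁺ and x₊ ∈ X₊. -/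
/-- If `u` is a nonnegative, sublinear and continuous order-preserving function for a
complete preorder `⪯` on a real convex cone `X` with `X₀`, `X₊` nonempty and `X₋` empty,
then `⪯` is homothetic and continuous, `u x₊ > 0` and `{q • x₊ : q ∈ ℚ⁺⁺}` is
order-dense in `(X₊, ⪯)` for each `x₊ ∈ X₊`, `x ∼ y` on `X₀`, `x ≺ x₊` for `x ∈ X₀`,
`x₊ ∈ X₊`, and `x + y ≺ (q + r) • x₊` whenever `x ≺ q • x₊` and `y ≺ r • x₊`. -/
theorem necessity_of_sublinear_representation_conditions
    {E : Type*} [AddCommGroup E] [Module ℝ E] [TopologicalSpace E]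
    [IsTopologicalAddGroup E] [ContinuousSMul ℝ E]
    (X : Set E)
    (hcone : ∀ x ∈ X, ∀ t : ℝ, 0 < t → t • x ∈ X)
    (hconv : ∀ x ∈ X, ∀ y ∈ X, x + y ∈ X)
    (pre : E → E → Prop)
    (hrefl : ∀ x ∈ X, pre x x)
    (htrans : ∀ x ∈ X, ∀ y ∈ X, ∀ z ∈ X, pre x y → pre y z → pre x z)
    (hcomplete : ∀ x ∈ X, ∀ y ∈ X, pre x y ∨ pre y x)
    (lt_ : E → E → Prop)
    (hlt : ∀ x y, lt_ x y ↔ pre x y ∧ ¬ pre y x)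
    (X0 Xp Xm : Set E)
    (hX0 : X0 = {x ∈ X | ∃ t : ℝ, 0 < t ∧ t ≠ 1 ∧ pre x (t • x) ∧ pre (t • x) x})
    (hXp : Xp = {x ∈ X | ∃ t : ℝ, 1 < t ∧ lt_ x (t • x)})
    (hXm : Xm = {x ∈ X | ∃ t : ℝ, 1 < t ∧ lt_ (t • x) x})
    (hX0ne : X0.Nonempty) (hXpne : Xp.Nonempty) (hXme : Xm = ∅)
    (u : E → ℝ)
    (hnonneg : ∀ x ∈ X, 0 ≤ u x)
    (hhomog : ∀ x ∈ X, ∀ t : ℝ, 0 < t → u (t • x) = t * u x)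
    (hsubadd : ∀ x ∈ X, ∀ y ∈ X, u (x + y) ≤ u x + u y)
    (hcont : ContinuousOn u X)
    (hincr : ∀ x ∈ X, ∀ y ∈ X, pre x y → u x ≤ u y)
    (hstrict : ∀ x ∈ X, ∀ y ∈ X, lt_ x y → u x < u y) :
    -- (a) homothetic
    (∀ x ∈ X, ∀ y ∈ X, ∀ t : ℝ, 0 < t → pre x y → pre (t • x) (t • y)) ∧
    -- (b) continuous
    (∀ x ∈ X,
      (∃ V : Set E, IsOpen V ∧ {z ∈ X | lt_ z x} = V ∩ X) ∧
      (∃ W : Set E, IsOpen W ∧ {z ∈ X | lt_ x z} = W ∩ X)) ∧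
    -- (c) u is positive on X₊ and rational multiples are order-dense in (X₊, ⪯)
    (∀ xp ∈ Xp, 0 < u xp) ∧
    (∀ xp ∈ Xp, ∀ x ∈ Xp, ∀ y ∈ Xp, lt_ x y →
      ∃ q : ℚ, 0 < q ∧ lt_ x ((q : ℝ) • xp) ∧ lt_ ((q : ℝ) • xp) y) ∧
    -- (d)
    (∀ x ∈ X0, ∀ y ∈ X0, pre x y ∧ pre y x) ∧
    -- (e)
    (∀ x ∈ X0, ∀ xp ∈ Xp, lt_ x xp) ∧
    -- (f)
    (∀ x ∈ X, ∀ y ∈ X, ∀ xp ∈ Xp, ∀ q r : ℚ, 0 < q → 0 < r →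
      lt_ x ((q : ℝ) • xp) → lt_ y ((r : ℝ) • xp) →
      lt_ (x + y) (((q : ℝ) + (r : ℝ)) • xp)) := by

  have key : ∀ x ∈ X, ∀ y ∈ X, (pre x y ↔ u x ≤ u y) := by
    intro x hx y hy
    constructor
    · exact hincr x hx y hy
    · intro h
      rcases hcomplete x hx y hy with h1 | h1
      · exact h1
      · by_contra hn
        have : lt_ y x := (hlt y x).2 ⟨h1, hn⟩
        exact absurd (hstrict y hy x hx this) (not_lt.2 h)
  have keylt : ∀ x ∈ X, ∀ y ∈ X, (lt_ x y ↔ u x < u y) := by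
    intro x hx y hy
    rw [hlt]
    constructor
    · rintro ⟨h1, h2⟩
      exact lt_of_le_not_ge ((key x hx y hy).1 h1) fun h => h2 ((key y hy x hx).2 h)
    · intro h
      exact ⟨(key x hx y hy).2 h.le, fun hyx => absurd ((key y hy x hx).1 hyx) (not_le.2 h)⟩
  have hXpmem : ∀ xp ∈ Xp, xp ∈ X := by
    intro xp hxp; rw [hXp] at hxp; exact hxp.1
  have hupos : ∀ xp ∈ Xp, 0 < u xp := by
    intro xp hxp
    rw [hXp] at hxp
    obtain ⟨hxX, t, ht1, hlt'⟩ := hxp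
    have ht0 : (0:ℝ) < t := lt_trans one_pos ht1
    have h1 : u xp < u (t • xp) := (keylt xp hxX (t • xp) (hcone xp hxX t ht0)).1 hlt'
    rw [hhomog xp hxX t ht0] at h1
    nlinarith
  have huzero : ∀ x ∈ X0, u x = 0 := by
    intro x hx
    rw [hX0] at hx
    obtain ⟨hxX, t, ht0, ht1, hp1, hp2⟩ := hx
    have h1 : u x ≤ u (t • x) := (key x hxX (t • x) (hcone x hxX t ht0)).1 hp1
    have h2 : u (t • x) ≤ u x := (key (t • x) (hcone x hxX t ht0) x hxX).1 hp2
    rw [hhomog x hxX t ht0] at h1 h2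
    have hne : t - 1 ≠ 0 := sub_ne_zero.2 ht1
    have : (t - 1) * u x = 0 := le_antisymm (by nlinarith) (by nlinarith)
    rcases mul_eq_zero.1 this with h | h
    · exact absurd h hne
    · exact h
  refine ⟨?_, ?_, hupos, ?_, ?_, ?_, ?_⟩
  · -- (a)
    intro x hx y hy t ht hxy
    have := (key x hx y hy).1 hxy
    refine (key (t • x) (hcone x hx t ht) (t • y) (hcone y hy t ht)).2 ?_
    rw [hhomog x hx t ht, hhomog y hy t ht]
    exact mul_le_mul_of_nonneg_left this ht.le
  · -- (b)
    intro x hx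
    have hc := continuousOn_iff'.1 hcont
    constructor
    · obtain ⟨V, hVo, hV⟩ := hc (Set.Iio (u x)) isOpen_Iio
      refine ⟨V, hVo, ?_⟩
      rw [← hV]
      ext z
      simp only [Set.mem_setOf_eq, Set.mem_inter_iff, Set.mem_preimage, Set.mem_Iio]
      constructor
      · rintro ⟨hz, hzl⟩; exact ⟨(keylt z hz x hx).1 hzl, hz⟩
      · rintro ⟨hzl, hz⟩; exact ⟨hz, (keylt z hz x hx).2 hzl⟩
    · obtain ⟨V, hVo, hV⟩ := hc (Set.Ioi (u x)) isOpen_Ioi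
      refine ⟨V, hVo, ?_⟩
      rw [← hV]
      ext z
      simp only [Set.mem_setOf_eq, Set.mem_inter_iff, Set.mem_preimage, Set.mem_Ioi]
      constructor
      · rintro ⟨hz, hzl⟩; exact ⟨(keylt x hx z hz).1 hzl, hz⟩
      · rintro ⟨hzl, hz⟩; exact ⟨hz, (keylt x hx z hz).2 hzl⟩
  · -- (c) density
    intro xp hxp x hxXp y hyXp hxy
    have hpX := hXpmem xp hxp
    have hxX := hXpmem x hxXp
    have hyX := hXpmem y hyXp
    have hup := hupos xp hxp
    have hxy' : u x < u y := (keylt x hxX y hyX).1 hxy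
    obtain ⟨q, hq1, hq2⟩ := exists_rat_btwn (div_lt_div_of_pos_right hxy' hup)
    have hq0 : (0:ℝ) < (q:ℝ) :=
      lt_of_le_of_lt (div_nonneg (hnonneg x hxX) hup.le) hq1
    have hq0' : 0 < q := by exact_mod_cast hq0
    have hqX : (q:ℝ) • xp ∈ X := hcone xp hpX _ hq0
    have huq : u ((q:ℝ) • xp) = (q:ℝ) * u xp := hhomog xp hpX _ hq0
    refine ⟨q, hq0', ?_, ?_⟩
    · refine (keylt x hxX _ hqX).2 ?_
      rw [huq]
      calc u x = (u x / u xp) * u xp := by field_simp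
        _ < (q:ℝ) * u xp := by exact mul_lt_mul_of_pos_right hq1 hup
    · refine (keylt _ hqX y hyX).2 ?_
      rw [huq]
      calc (q:ℝ) * u xp < (u y / u xp) * u xp := mul_lt_mul_of_pos_right hq2 hup
        _ = u y := by field_simp
  · -- (d)
    intro x hx y hy
    have hxX : x ∈ X := by rw [hX0] at hx; exact hx.1
    have hyX : y ∈ X := by rw [hX0] at hy; exact hy.1
    constructor
    · exact (key x hxX y hyX).2 (by rw [huzero x hx, huzero y hy])
    · exact (key y hyX x hxX).2 (by rw [huzero x hx, huzero y hy])
  · -- (e)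
    intro x hx xp hxp
    have hxX : x ∈ X := by rw [hX0] at hx; exact hx.1
    refine (keylt x hxX xp (hXpmem xp hxp)).2 ?_
    rw [huzero x hx]
    exact hupos xp hxp
  · -- (f)
    intro x hx y hy xp hxp q r hq hr hxq hyr
    have hpX := hXpmem xp hxp
    have hq' : (0:ℝ) < (q:ℝ) := by exact_mod_cast hq
    have hr' : (0:ℝ) < (r:ℝ) := by exact_mod_cast hr
    have hqr : (0:ℝ) < (q:ℝ) + (r:ℝ) := by linarith
    have hqX : (q:ℝ) • xp ∈ X := hcone xp hpX _ hq'
    have hrX : (r:ℝ) • xp ∈ X := hcone xp hpX _ hr'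
    have hqrX : ((q:ℝ) + (r:ℝ)) • xp ∈ X := hcone xp hpX _ hqr
    have h1 : u x < (q:ℝ) * u xp := by
      have := (keylt x hx _ hqX).1 hxq
      rwa [hhomog xp hpX _ hq'] at this
    have h2 : u y < (r:ℝ) * u xp := by
      have := (keylt y hy _ hrX).1 hyr
      rwa [hhomog xp hpX _ hr'] at this
    refine (keylt (x + y) (hconv x hx y hy) _ hqrX).2 ?_
    rw [hhomog xp hpX _ hqr]
    calc u (x + y) ≤ u x + u y := hsubadd x hx y hy
      _ < ((q:ℝ) + (r:ℝ)) * u xp := by nlinarith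
end

section
/- Let ⪯ be a complete preorder on a real convex cone X in a topological real vector space E with X₀ and X₊ nonempty and X₋ empty, and assume: (a) ⪯ is homothetic; (b) ⪯ is continuous; (c) for every x₊ ∈ X₊ the set {q·x₊ : q ∈ ℚ⁺⁺} is order-dense in (X₊, ⪯); (d) x ~ y for every x, y ∈ X₀; (e) x ≺ x₊ for every x ∈ X₀, x₊ ∈ X₊; (f) x + y ≺ (q + r)·x₊ whenever x ≺ q·x₊ and y ≺ r·x₊ with q, r ∈ ℚ⁺⁺ and x₊ ∈ X₊. Then there exists a nonnegative, sublinear and continuous order-preserving function u : X → ℝ for ⪯. -/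
open scoped Pointwise in
/-- If a complete preorder `⪯` on a real convex cone `X` (with `X₀`, `X₊` nonempty
and `X₋` empty) is homothetic and continuous, rational multiples of each `x₊ ∈ X₊`
are order-dense in `(X₊, ⪯)`, all elements of `X₀` are equivalent, `X₀` lies strictly
below `X₊`, and `x + y ≺ (q + r) • x₊` whenever `x ≺ q • x₊` and `y ≺ r • x₊`, then
there exists a nonnegative, sublinear and continuous order-preserving function for `⪯`. -/
theorem sufficiency_of_sublinear_representation_conditions
    {E : Type*} [AddCommGroup E] [Module ℝ E] [TopologicalSpace E]
    [IsTopologicalAddGroup E] [ContinuousSMul ℝ E]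
    (X : Set E)
    (hcone : ∀ x ∈ X, ∀ t : ℝ, 0 < t → t • x ∈ X)
    (hconv : ∀ x ∈ X, ∀ y ∈ X, x + y ∈ X)
    (pre : E → E → Prop)
    (hrefl : ∀ x ∈ X, pre x x)
    (htrans : ∀ x ∈ X, ∀ y ∈ X, ∀ z ∈ X, pre x y → pre y z → pre x z)
    (hcomplete : ∀ x ∈ X, ∀ y ∈ X, pre x y ∨ pre y x)
    (lt_ : E → E → Prop)
    (hlt : ∀ x y, lt_ x y ↔ pre x y ∧ ¬ pre y x)
    (X0 Xp Xm : Set E)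
    (hX0 : X0 = {x ∈ X | ∃ t : ℝ, 0 < t ∧ t ≠ 1 ∧ pre x (t • x) ∧ pre (t • x) x})
    (hXp : Xp = {x ∈ X | ∃ t : ℝ, 1 < t ∧ lt_ x (t • x)})
    (hXm : Xm = {x ∈ X | ∃ t : ℝ, 1 < t ∧ lt_ (t • x) x})
    (hX0ne : X0.Nonempty) (hXpne : Xp.Nonempty) (hXme : Xm = ∅)
    -- (a) homothetic
    (hhomothetic : ∀ x ∈ X, ∀ y ∈ X, ∀ t : ℝ, 0 < t → pre x y → pre (t • x) (t • y))
    -- (b) continuous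
    (hcontpre : ∀ x ∈ X,
      (∃ V : Set E, IsOpen V ∧ {z ∈ X | lt_ z x} = V ∩ X) ∧
      (∃ W : Set E, IsOpen W ∧ {z ∈ X | lt_ x z} = W ∩ X))
    -- (c) order-density
    (hdense : ∀ xp ∈ Xp, ∀ x ∈ Xp, ∀ y ∈ Xp, lt_ x y →
      ∃ q : ℚ, 0 < q ∧ lt_ x ((q : ℝ) • xp) ∧ lt_ ((q : ℝ) • xp) y)
    -- (d)
    (hX0equiv : ∀ x ∈ X0, ∀ y ∈ X0, pre x y ∧ pre y x)
    -- (e)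
    (hbelow : ∀ x ∈ X0, ∀ xp ∈ Xp, lt_ x xp)
    -- (f)
    (hf : ∀ x ∈ X, ∀ y ∈ X, ∀ xp ∈ Xp, ∀ q r : ℚ, 0 < q → 0 < r →
      lt_ x ((q : ℝ) • xp) → lt_ y ((r : ℝ) • xp) →
      lt_ (x + y) (((q : ℝ) + (r : ℝ)) • xp)) :
    ∃ u : E → ℝ,
      (∀ x ∈ X, 0 ≤ u x) ∧
      (∀ x ∈ X, ∀ t : ℝ, 0 < t → u (t • x) = t * u x) ∧
      (∀ x ∈ X, ∀ y ∈ X, u (x + y) ≤ u x + u y) ∧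
      ContinuousOn u X ∧
      (∀ x ∈ X, ∀ y ∈ X, pre x y → u x ≤ u y) ∧
      (∀ x ∈ X, ∀ y ∈ X, lt_ x y → u x < u y) := by
  classical
  obtain ⟨e, heXp⟩ := hXpne
  subst hX0 hXp hXm
  -- basic facts about lt_
  have mklt : ∀ x y, pre x y → ¬ pre y x → lt_ x y := fun x y h1 h2 => (hlt x y).2 ⟨h1, h2⟩
  have hltp : ∀ x y, lt_ x y → pre x y := fun x y h => ((hlt x y).1 h).1
  have hltn : ∀ x y, lt_ x y → ¬ pre y x := fun x y h => ((hlt x y).1 h).2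
  have ltp_trans : ∀ x ∈ X, ∀ y ∈ X, ∀ z ∈ X, lt_ x y → pre y z → lt_ x z := by
    intro x hx y hy z hz hxy hyz
    refine mklt _ _ (htrans x hx y hy z hz (hltp _ _ hxy) hyz) fun hzx => ?_
    exact hltn _ _ hxy (htrans y hy z hz x hx hyz hzx)
  have plt_trans : ∀ x ∈ X, ∀ y ∈ X, ∀ z ∈ X, pre x y → lt_ y z → lt_ x z := by
    intro x hx y hy z hz hxy hyz
    refine mklt _ _ (htrans x hx y hy z hz hxy (hltp _ _ hyz)) fun hzx => ?_
    exact hltn _ _ hyz (htrans z hz x hx y hy hzx hxy)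
  have hsmul_inv : ∀ t : ℝ, t ≠ 0 → ∀ z : E, t⁻¹ • (t • z) = z := by
    intro t ht z; rw [smul_smul, inv_mul_cancel₀ ht, one_smul]
  have hpre_iff : ∀ x ∈ X, ∀ y ∈ X, ∀ t : ℝ, 0 < t → (pre x y ↔ pre (t • x) (t • y)) := by
    intro x hx y hy t ht
    constructor
    · exact hhomothetic x hx y hy t ht
    · intro h
      have := hhomothetic (t • x) (hcone x hx t ht) (t • y) (hcone y hy t ht) t⁻¹
        (inv_pos.2 ht) h
      rwa [hsmul_inv t ht.ne', hsmul_inv t ht.ne'] at this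
  have hlt_iff : ∀ x ∈ X, ∀ y ∈ X, ∀ t : ℝ, 0 < t → (lt_ x y ↔ lt_ (t • x) (t • y)) := by
    intro x hx y hy t ht
    rw [hlt, hlt, hpre_iff x hx y hy t ht, hpre_iff y hy x hx t ht]
  -- X₋ = ∅: scaling up is weakly increasing
  have hup : ∀ y ∈ X, ∀ r : ℝ, 1 < r → pre y (r • y) := by
    intro y hy r hr
    by_contra h
    have hry : r • y ∈ X := hcone y hy r (by linarith)
    have h2 : pre (r • y) y := (hcomplete y hy (r • y) hry).resolve_left h
    exact Set.eq_empty_iff_forall_notMem.mp hXme y ⟨hy, r, hr, mklt _ _ h2 h⟩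
  have hmono : ∀ x ∈ X, ∀ s t : ℝ, 0 < s → s ≤ t → pre (s • x) (t • x) := by
    intro x hx s t hs hst
    rcases eq_or_lt_of_le hst with rfl | hst
    · exact hrefl _ (hcone x hx s hs)
    · have h1 : pre (s • x) ((t / s) • (s • x)) :=
        hup (s • x) (hcone x hx s hs) (t / s) ((one_lt_div hs).2 hst)
      rwa [smul_smul, div_mul_cancel₀ _ hs.ne'] at h1
  -- strict scaling on X₊
  have hXp_lt_all : ∀ x ∈ {x ∈ X | ∃ t : ℝ, 1 < t ∧ lt_ x (t • x)}, ∀ t : ℝ, 1 < t →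
      lt_ x (t • x) := by
    rintro x ⟨hx, t₀, ht₀, hlt₀⟩ t ht
    refine mklt _ _ (hup x hx t ht) fun h => ?_
    have hiter : ∀ n : ℕ, pre (t ^ (n + 1) • x) x := by
      intro n
      induction n with
      | zero => rwa [pow_one]
      | succ n ih =>
        have h2 := hhomothetic (t • x) (hcone x hx t (by linarith)) x hx (t ^ (n + 1))
          (pow_pos (by linarith) _) h
        rw [smul_smul, ← pow_succ] at h2
        exact htrans _ (hcone x hx _ (pow_pos (by linarith) _)) _
          (hcone x hx _ (pow_pos (by linarith) _)) _ hx h2 ih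
    obtain ⟨n, hn⟩ := pow_unbounded_of_one_lt t₀ ht
    have h3 : pre (t₀ • x) (t ^ (n + 1) • x) :=
      hmono x hx t₀ (t ^ (n + 1)) (by linarith)
        (le_of_lt (lt_of_lt_of_le hn (pow_le_pow_right₀ (by linarith) (Nat.le_succ n))))
    exact hltn _ _ hlt₀ (htrans _ (hcone x hx t₀ (by linarith)) _
      (hcone x hx _ (pow_pos (by linarith) _)) _ hx h3 (hiter n))
  have hXp_strict : ∀ x ∈ {x ∈ X | ∃ t : ℝ, 1 < t ∧ lt_ x (t • x)}, ∀ s t : ℝ, 0 < s →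
      s < t → lt_ (s • x) (t • x) := by
    intro x hxp s t hs hst
    have h1 : lt_ x ((t / s) • x) := hXp_lt_all x hxp (t / s) ((one_lt_div hs).2 hst)
    have hx := hxp.1
    have h2 := (hlt_iff x hx ((t / s) • x) (hcone x hx _ (div_pos (hs.trans hst) hs)) s hs).1 h1
    rwa [smul_smul, mul_div_cancel₀ _ hs.ne'] at h2
  have hXp_smul : ∀ x ∈ {x ∈ X | ∃ t : ℝ, 1 < t ∧ lt_ x (t • x)}, ∀ s : ℝ, 0 < s →
      s • x ∈ {x ∈ X | ∃ t : ℝ, 1 < t ∧ lt_ x (t • x)} := by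
    intro x hxp s hs
    refine ⟨hcone x hxp.1 s hs, 2, one_lt_two, ?_⟩
    have := hXp_strict x hxp s (2 * s) hs (by linarith)
    rwa [show (2 * s) • x = (2:ℝ) • s • x by rw [smul_smul]] at this
  have heX : e ∈ X := heXp.1
  have heXse : ∀ s : ℝ, 0 < s → s • e ∈ {x ∈ X | ∃ t : ℝ, 1 < t ∧ lt_ x (t • x)} :=
    fun s hs => hXp_smul e heXp s hs
  -- trichotomy
  have htri : ∀ x ∈ X, x ∈ {x ∈ X | ∃ t : ℝ, 0 < t ∧ t ≠ 1 ∧ pre x (t • x) ∧ pre (t • x) x}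
      ∨ x ∈ {x ∈ X | ∃ t : ℝ, 1 < t ∧ lt_ x (t • x)} := by
    intro x hx
    have h2x : (2:ℝ) • x ∈ X := hcone x hx 2 two_pos
    by_cases h1 : pre x ((2:ℝ) • x)
    · by_cases h2 : pre ((2:ℝ) • x) x
      · exact Or.inl ⟨hx, 2, two_pos, (by norm_num : (2:ℝ) ≠ 1), h1, h2⟩
      · exact Or.inr ⟨hx, 2, one_lt_two, mklt _ _ h1 h2⟩
    · have h2 : pre ((2:ℝ) • x) x := (hcomplete x hx _ h2x).resolve_left h1
      exact absurd (Set.eq_empty_iff_forall_notMem.mp hXme x ⟨hx, 2, one_lt_two, mklt _ _ h2 h1⟩)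
        (fun h => h)
  have hX0_smul : ∀ x ∈ {x ∈ X | ∃ t : ℝ, 0 < t ∧ t ≠ 1 ∧ pre x (t • x) ∧ pre (t • x) x},
      ∀ s : ℝ, 0 < s →
      s • x ∈ {x ∈ X | ∃ t : ℝ, 0 < t ∧ t ≠ 1 ∧ pre x (t • x) ∧ pre (t • x) x} := by
    rintro x ⟨hx, t₁, ht₁, ht₁', hp1, hp2⟩ s hs
    refine ⟨hcone x hx s hs, t₁, ht₁, ht₁', ?_, ?_⟩
    · have := hhomothetic x hx (t₁ • x) (hcone x hx t₁ ht₁) s hs hp1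
      rwa [smul_smul, mul_comm, ← smul_smul] at this
    · have := hhomothetic (t₁ • x) (hcone x hx t₁ ht₁) x hx s hs hp2
      rwa [smul_smul, mul_comm, ← smul_smul] at this
  have hX0_lt : ∀ x ∈ {x ∈ X | ∃ t : ℝ, 0 < t ∧ t ≠ 1 ∧ pre x (t • x) ∧ pre (t • x) x},
      ∀ s : ℝ, 0 < s → lt_ x (s • e) :=
    fun x hx s hs => hbelow x hx (s • e) (heXse s hs)
  -- the utility function
  set S : E → Set ℝ := fun x => {s : ℝ | 0 < s ∧ lt_ x (s • e)} with hS
  set u : E → ℝ := fun x => sInf (S x) with hu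
  have hbdd : ∀ x, BddBelow (S x) := fun x => ⟨0, fun s hs => hs.1.le⟩
  have hSne : ∀ x ∈ X, (S x).Nonempty := by
    intro x hx
    rcases htri x hx with h0 | hp
    · exact ⟨1, one_pos, hX0_lt x h0 1 one_pos⟩
    · have h2 : lt_ x ((2:ℝ) • x) := hXp_lt_all x hp 2 one_lt_two
      obtain ⟨q, hq, hq1, -⟩ := hdense e heXp x hp ((2:ℝ) • x) (hXp_smul x hp 2 two_pos) h2
      exact ⟨(q : ℝ), by exact_mod_cast hq, hq1⟩
  have hle : ∀ x, ∀ s ∈ S x, u x ≤ s := fun x s hs => csInf_le (hbdd x) hs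
  have hu0 : ∀ x ∈ X, 0 ≤ u x := fun x hx => le_csInf (hSne x hx) fun s hs => hs.1.le
  have hge : ∀ x ∈ X, ∀ s : ℝ, 0 < s → pre (s • e) x → s ≤ u x := by
    intro x hx s hs hpre
    refine le_csInf (hSne x hx) fun r hr => ?_
    by_contra h
    push_neg at h
    have h1 : pre (r • e) (s • e) := hmono e heX r s hr.1 h.le
    have h2 : lt_ (s • e) (r • e) := plt_trans _ (hcone e heX s hs) x hx _
      (hcone e heX r hr.1) hpre hr.2
    exact hltn _ _ h2 h1
  have hixlt : ∀ x ∈ X, ∀ s : ℝ, 0 < s → s < u x → pre (s • e) x := by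
    intro x hx s hs hsu
    by_contra h
    have h1 : pre x (s • e) := (hcomplete x hx (s • e) (hcone e heX s hs)).resolve_right h
    exact absurd (hle x s ⟨hs, mklt _ _ h1 h⟩) (not_le.2 hsu)
  have hX0u : ∀ x ∈ {x ∈ X | ∃ t : ℝ, 0 < t ∧ t ≠ 1 ∧ pre x (t • x) ∧ pre (t • x) x},
      u x = 0 := by
    intro x hx
    have : S x = Set.Ioi 0 := by
      ext s
      exact ⟨fun h => h.1, fun h => ⟨h, hX0_lt x hx s h⟩⟩
    rw [hu]
    simp only
    rw [this, csInf_Ioi]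
  have huq : ∀ x ∈ X, ∀ c : ℝ, u x < c → ∃ q : ℚ, 0 < q ∧ (q : ℝ) < c ∧ lt_ x ((q:ℝ) • e) := by
    intro x hx c hc
    have hc0 : 0 < c := lt_of_le_of_lt (hu0 x hx) hc
    rcases htri x hx with h0 | hp
    · obtain ⟨q, hq0, hqc⟩ := exists_rat_btwn hc0
      have hq0' : (0:ℚ) < q := by exact_mod_cast hq0
      exact ⟨q, hq0', hqc, hX0_lt x h0 (q:ℝ) (by exact_mod_cast hq0')⟩
    · obtain ⟨s, hsS, hsc⟩ := exists_lt_of_csInf_lt (hSne x hx) hc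
      obtain ⟨q, hq, hq1, hq2⟩ := hdense e heXp x hp (s • e) (heXse s hsS.1) hsS.2
      have hqs : (q : ℝ) < s := by
        by_contra h
        push_neg at h
        exact hltn _ _ hq2 (hmono e heX s (q:ℝ) hsS.1 h)
      exact ⟨q, hq, lt_trans hqs hsc, hq1⟩
  refine ⟨u, hu0, ?_, ?_, ?_, ?_, ?_⟩
  · -- homogeneity
    intro x hx t ht
    have hset : S (t • x) = t • (S x) := by
      ext s
      constructor
      · rintro ⟨hs0, hlts⟩
        refine ⟨s / t, ⟨by positivity, ?_⟩, by simp [smul_eq_mul, mul_div_cancel₀ _ ht.ne']⟩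
        have h2 := (hlt_iff x hx ((s / t) • e) (hcone e heX _ (by positivity)) t ht).2
        rw [smul_smul, mul_div_cancel₀ _ ht.ne'] at h2
        exact h2 hlts
      · rintro ⟨r, ⟨hr0, hltr⟩, rfl⟩
        refine ⟨by positivity, ?_⟩
        have h2 := (hlt_iff x hx (r • e) (hcone e heX r hr0) t ht).1 hltr
        rwa [smul_smul, ← smul_eq_mul] at h2
    rw [hu]
    simp only
    rw [hset, Real.sInf_smul_of_nonneg ht.le, smul_eq_mul]
  · -- subadditivity
    intro x hx y hy
    refine le_of_forall_pos_le_add fun ε hε => ?_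
    obtain ⟨q, hq0, hqlt, hqe⟩ := huq x hx (u x + ε / 2) (by linarith)
    obtain ⟨r, hr0, hrlt, hre⟩ := huq y hy (u y + ε / 2) (by linarith)
    have hsum := hf x hx y hy e heXp q r hq0 hr0 hqe hre
    have hmem : ((q : ℝ) + (r : ℝ)) ∈ S (x + y) := ⟨by positivity, hsum⟩
    calc u (x + y) ≤ (q : ℝ) + (r : ℝ) := hle _ _ hmem
      _ ≤ u x + u y + ε := by linarith
  · -- continuity
    intro x hx
    show Filter.Tendsto u (nhdsWithin x X) (nhds (u x))
    rw [tendsto_order]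
    constructor
    · intro a ha
      by_cases ha0 : a < 0
      · filter_upwards [self_mem_nhdsWithin] with y hy
        exact lt_of_lt_of_le ha0 (hu0 y hy)
      · push_neg at ha0
        obtain ⟨s, hs1, hs2⟩ := exists_between ha
        obtain ⟨s', hs1', hs2'⟩ := exists_between hs2
        have hs0 : 0 < s := lt_of_le_of_lt ha0 hs1
        have hs0' : 0 < s' := lt_trans hs0 hs1'
        have hpre : pre (s' • e) x := hixlt x hx s' hs0' hs2'
        have hltse : lt_ (s • e) x := ltp_trans _ (hcone e heX s hs0) _
          (hcone e heX s' hs0') x hx (hXp_strict e heXp s s' hs0 hs1') hpre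
        obtain ⟨-, W, hWopen, hWeq⟩ := hcontpre (s • e) (hcone e heX s hs0)
        have hxW : x ∈ W := by
          have : x ∈ {z ∈ X | lt_ (s • e) z} := ⟨hx, hltse⟩
          rw [hWeq] at this
          exact this.1
        filter_upwards [Filter.inter_mem (mem_nhdsWithin_of_mem_nhds (hWopen.mem_nhds hxW))
          self_mem_nhdsWithin] with y hy
        have hymem : y ∈ {z ∈ X | lt_ (s • e) z} := by rw [hWeq]; exact hy
        exact lt_of_lt_of_le hs1 (hge y hy.2 s hs0 (hltp _ _ hymem.2))
    · intro a ha
      obtain ⟨q, hq0, hqa, hqe⟩ := huq x hx a ha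
      have hq0' : (0:ℝ) < (q:ℝ) := by exact_mod_cast hq0
      obtain ⟨⟨V, hVopen, hVeq⟩, -⟩ := hcontpre ((q:ℝ) • e) (hcone e heX _ hq0')
      have hxV : x ∈ V := by
        have : x ∈ {z ∈ X | lt_ z ((q:ℝ) • e)} := ⟨hx, hqe⟩
        rw [hVeq] at this
        exact this.1
      filter_upwards [Filter.inter_mem (mem_nhdsWithin_of_mem_nhds (hVopen.mem_nhds hxV))
        self_mem_nhdsWithin] with y hy
      have hymem : y ∈ {z ∈ X | lt_ z ((q:ℝ) • e)} := by rw [hVeq]; exact hy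
      exact lt_of_le_of_lt (hle y (q:ℝ) ⟨hq0', hymem.2⟩) hqa
  · -- monotone
    intro x hx y hy hxy
    refine csInf_le_csInf (hbdd x) (hSne y hy) fun s hs => ?_
    exact ⟨hs.1, plt_trans x hx y hy _ (hcone e heX s hs.1) hxy hs.2⟩
  · -- strictly monotone
    intro x hx y hy hxy
    have hyXp : y ∈ {x ∈ X | ∃ t : ℝ, 1 < t ∧ lt_ x (t • x)} := by
      rcases htri y hy with h0 | hp
      · rcases htri x hx with h0' | hp'
        · exact absurd (hX0equiv y h0 x h0').1 (hltn _ _ hxy)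
        · exact absurd (hltp _ _ (hbelow y h0 x hp')) (hltn _ _ hxy)
      · exact hp
    rcases htri x hx with h0 | hp
    · rw [hX0u x h0]
      have h1 : lt_ ((2:ℝ)⁻¹ • y) y := by
        have := hXp_strict y hyXp 2⁻¹ 1 (by norm_num) (by norm_num)
        rwa [one_smul] at this
      obtain ⟨q, hq, -, hq2⟩ := hdense e heXp ((2:ℝ)⁻¹ • y) (hXp_smul y hyXp _ (by norm_num))
        y hyXp h1
      have hq0' : (0:ℝ) < (q:ℝ) := by exact_mod_cast hq
      exact lt_of_lt_of_le hq0' (hge y hy (q:ℝ) hq0' (hltp _ _ hq2))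
    · obtain ⟨q, hq, hq1, hq2⟩ := hdense e heXp x hp y hyXp hxy
      obtain ⟨q', hq', hq1', hq2'⟩ := hdense e heXp ((q:ℝ) • e)
        (heXse (q:ℝ) (by exact_mod_cast hq)) y hyXp hq2
      have hq0 : (0:ℝ) < (q:ℝ) := by exact_mod_cast hq
      have hq0' : (0:ℝ) < (q':ℝ) := by exact_mod_cast hq'
      have hqq' : (q:ℝ) < (q':ℝ) := by
        by_contra h
        push_neg at h
        exact hltn _ _ hq1' (hmono e heX (q':ℝ) (q:ℝ) hq0' h)
      calc u x ≤ (q:ℝ) := hle x (q:ℝ) ⟨hq0, hq1⟩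
        _ < (q':ℝ) := hqq'
        _ ≤ u y := hge y hy (q':ℝ) hq0' (hltp _ _ hq2')
end

section
/- Let ⪯ be a complete preorder on a real convex cone X in a topological real vector space E, assume X₊ is nonempty, X₋ is empty, and the zero vector 0̄ belongs to X. Then there exists a nonnegative, sublinear and continuous order-preserving function u : X → ℝ for ⪯ if and only if ⪯ is homothetic, ⪯ is continuous, and x + y ≺ (q + r)·x₊ for every x, y ∈ X, x₊ ∈ X₊, q, r ∈ ℚ⁺⁺ such that x ≺ q·x₊ and y ≺ r·x₊. -/
open Pointwise


/-- Corollary 2: Let `⪯` be a complete preorder on a real convex cone `X` in a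
topological real vector space with `X₊` nonempty, `X₋` empty, and `0 ∈ X`.  There exists
a nonnegative, sublinear and continuous order-preserving function for `⪯` iff `⪯` is
homothetic and continuous and `x + y ≺ (q + r) • x₊` whenever `x ≺ q • x₊` and
`y ≺ r • x₊` (`x₊ ∈ X₊`, `q, r ∈ ℚ⁺⁺`). -/
theorem complete_preorder_sublinear_representation_iff_of_zero_mem
    {E : Type*} [AddCommGroup E] [Module ℝ E] [TopologicalSpace E]
    [IsTopologicalAddGroup E] [ContinuousSMul ℝ E]
    (X : Set E)
    (hcone : ∀ x ∈ X, ∀ t : ℝ, 0 < t → t • x ∈ X)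
    (hconv : ∀ x ∈ X, ∀ y ∈ X, x + y ∈ X)
    (pre : E → E → Prop)
    (hrefl : ∀ x ∈ X, pre x x)
    (htrans : ∀ x ∈ X, ∀ y ∈ X, ∀ z ∈ X, pre x y → pre y z → pre x z)
    (hcomplete : ∀ x ∈ X, ∀ y ∈ X, pre x y ∨ pre y x)
    (lt_ : E → E → Prop)
    (hlt : ∀ x y, lt_ x y ↔ pre x y ∧ ¬ pre y x)
    (Xp Xm : Set E)
    (hXp : Xp = {x ∈ X | ∃ t : ℝ, 1 < t ∧ lt_ x (t • x)})
    (hXm : Xm = {x ∈ X | ∃ t : ℝ, 1 < t ∧ lt_ (t • x) x})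
    (hXpne : Xp.Nonempty) (hXme : Xm = ∅)
    (hzero : (0 : E) ∈ X) :
    (∃ u : E → ℝ,
      (∀ x ∈ X, 0 ≤ u x) ∧
      (∀ x ∈ X, ∀ t : ℝ, 0 < t → u (t • x) = t * u x) ∧
      (∀ x ∈ X, ∀ y ∈ X, u (x + y) ≤ u x + u y) ∧
      ContinuousOn u X ∧
      (∀ x ∈ X, ∀ y ∈ X, pre x y → u x ≤ u y) ∧
      (∀ x ∈ X, ∀ y ∈ X, lt_ x y → u x < u y)) ↔
    ((∀ x ∈ X, ∀ y ∈ X, ∀ t : ℝ, 0 < t → pre x y → pre (t • x) (t • y)) ∧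
     (∀ x ∈ X,
       (∃ V : Set E, IsOpen V ∧ {z ∈ X | lt_ z x} = V ∩ X) ∧
       (∃ W : Set E, IsOpen W ∧ {z ∈ X | lt_ x z} = W ∩ X)) ∧
     (∀ x ∈ X, ∀ y ∈ X, ∀ xp ∈ Xp, ∀ q r : ℚ, 0 < q → 0 < r →
       lt_ x ((q : ℝ) • xp) → lt_ y ((r : ℝ) • xp) →
       lt_ (x + y) (((q : ℝ) + (r : ℝ)) • xp))) := by
  constructor
  · -- Forward direction
    rintro ⟨u, hnn, hhg, hsub, hctu, hinc, hstr⟩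
    have ltiff : ∀ x ∈ X, ∀ y ∈ X, (lt_ x y ↔ u x < u y) := by
      intro x hx y hy
      constructor
      · exact hstr x hx y hy
      · intro h
        rcases hcomplete x hx y hy with h1 | h1
        · exact (hlt x y).2 ⟨h1, fun h2 => absurd (hinc y hy x hx h2) (not_le.2 h)⟩
        · exact absurd (hinc y hy x hx h1) (not_le.2 h)
    refine ⟨?_, ?_, ?_⟩
    · -- homothetic
      intro x hx y hy t ht hxy
      rcases hcomplete _ (hcone x hx t ht) _ (hcone y hy t ht) with h1 | h1
      · exact h1
      · by_contra h2
        have hl : u (t • y) < u (t • x) :=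
          (ltiff _ (hcone y hy t ht) _ (hcone x hx t ht)).1 ((hlt _ _).2 ⟨h1, h2⟩)
        rw [hhg y hy t ht, hhg x hx t ht] at hl
        have : u y < u x := by nlinarith
        exact absurd (hinc x hx y hy hxy) (not_le.2 this)
    · -- continuity
      intro x hx
      constructor
      · obtain ⟨V, hV, hV2⟩ := (continuousOn_iff'.1 hctu) (Set.Iio (u x)) isOpen_Iio
        refine ⟨V, hV, ?_⟩
        rw [← hV2]
        ext z
        simp only [Set.mem_setOf_eq, Set.mem_inter_iff, Set.mem_preimage, Set.mem_Iio]
        constructor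
        · rintro ⟨hz, h⟩; exact ⟨(ltiff z hz x hx).1 h, hz⟩
        · rintro ⟨h, hz⟩; exact ⟨hz, (ltiff z hz x hx).2 h⟩
      · obtain ⟨V, hV, hV2⟩ := (continuousOn_iff'.1 hctu) (Set.Ioi (u x)) isOpen_Ioi
        refine ⟨V, hV, ?_⟩
        rw [← hV2]
        ext z
        simp only [Set.mem_setOf_eq, Set.mem_inter_iff, Set.mem_preimage, Set.mem_Ioi]
        constructor
        · rintro ⟨hz, h⟩; exact ⟨(ltiff x hx z hz).1 h, hz⟩
        · rintro ⟨h, hz⟩; exact ⟨hz, (ltiff x hx z hz).2 h⟩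
    · -- additivity condition
      intro x hx y hy xp hxp q r hq hr h1 h2
      have hxpX : xp ∈ X := by rw [hXp] at hxp; exact hxp.1
      have hq' : (0:ℝ) < (q:ℝ) := by exact_mod_cast hq
      have hr' : (0:ℝ) < (r:ℝ) := by exact_mod_cast hr
      have hqr' : (0:ℝ) < (q:ℝ) + (r:ℝ) := by linarith
      have h1' : u x < (q:ℝ) * u xp := by
        have := (ltiff x hx _ (hcone xp hxpX _ hq')).1 h1
        rwa [hhg xp hxpX _ hq'] at this
      have h2' : u y < (r:ℝ) * u xp := by
        have := (ltiff y hy _ (hcone xp hxpX _ hr')).1 h2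
        rwa [hhg xp hxpX _ hr'] at this
      apply (ltiff (x + y) (hconv x hx y hy) _ (hcone xp hxpX _ hqr')).2
      rw [hhg xp hxpX _ hqr']
      calc u (x + y) ≤ u x + u y := hsub x hx y hy
        _ < ((q:ℝ) + (r:ℝ)) * u xp := by nlinarith
  · -- Reverse direction
    rintro ⟨hhomo, hcont, hadd⟩
    obtain ⟨xp, hxpXp⟩ := hXpne
    have hxpXp' := hxpXp
    rw [hXp] at hxpXp'
    obtain ⟨hxpX, t0, ht0, hxpt0⟩ := hxpXp'
    -- basic helpers
    have pre_of_not_lt : ∀ x ∈ X, ∀ y ∈ X, ¬ lt_ x y → pre y x := by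
      intro x hx y hy h
      rcases hcomplete x hx y hy with h1 | h1
      · by_contra h2
        exact h ((hlt x y).2 ⟨h1, h2⟩)
      · exact h1
    have lt_pre_trans : ∀ x ∈ X, ∀ y ∈ X, ∀ z ∈ X, lt_ x y → pre y z → lt_ x z := by
      intro x hx y hy z hz h1 h2
      obtain ⟨ha, hb⟩ := (hlt x y).1 h1
      refine (hlt x z).2 ⟨htrans x hx y hy z hz ha h2, fun h3 => hb ?_⟩
      exact htrans y hy z hz x hx h2 h3
    have pre_lt_trans : ∀ x ∈ X, ∀ y ∈ X, ∀ z ∈ X, pre x y → lt_ y z → lt_ x z := by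
      intro x hx y hy z hz h1 h2
      obtain ⟨ha, hb⟩ := (hlt y z).1 h2
      refine (hlt x z).2 ⟨htrans x hx y hy z hz h1 ha, fun h3 => hb ?_⟩
      exact htrans z hz x hx y hy h3 h1
    -- monotonicity along rays (weak)
    have pre_ray : ∀ x ∈ X, ∀ s t : ℝ, 0 < s → s ≤ t → pre (s • x) (t • x) := by
      intro x hx s t hs hst
      rcases eq_or_lt_of_le hst with rfl | hlt'
      · exact hrefl _ (hcone x hx s hs)
      · have ht : (1:ℝ) < t / s := (one_lt_div hs).2 hlt'
        have hnm : ¬ lt_ ((t / s) • x) x := by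
          intro hc
          have : x ∈ Xm := by rw [hXm]; exact ⟨hx, t / s, ht, hc⟩
          rw [hXme] at this
          exact this
        have h1 : pre x ((t / s) • x) := pre_of_not_lt _ (hcone x hx _ (by linarith)) x hx hnm
        have h2 := hhomo x hx _ (hcone x hx _ (by linarith)) s hs h1
        rwa [smul_smul, mul_div_cancel₀ _ (ne_of_gt hs)] at h2
    -- strict scaling of xp
    have lt_xp : ∀ t : ℝ, 1 < t → lt_ xp (t • xp) := by
      intro t ht
      by_contra hc
      have hpre : pre (t • xp) xp := by
        rcases hcomplete _ (hcone xp hxpX t (by linarith)) xp hxpX with h1 | h1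
        · exact h1
        · by_contra h2
          exact hc ((hlt _ _).2 ⟨h1, h2⟩)
      obtain ⟨n, hn⟩ := pow_unbounded_of_one_lt t0 ht
      have htpow : ∀ m : ℕ, (0:ℝ) < t ^ m := fun m => pow_pos (by linarith) m
      have hdown : ∀ m : ℕ, pre (t ^ m • xp) xp := by
        intro m
        induction m with
        | zero => simpa using hrefl xp hxpX
        | succ k ih =>
          have h2 := hhomo _ (hcone xp hxpX t (by linarith)) xp hxpX (t ^ k) (htpow k) hpre
          rw [smul_smul, ← pow_succ] at h2
          exact htrans _ (hcone xp hxpX _ (htpow (k+1))) _ (hcone xp hxpX _ (htpow k))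
            xp hxpX h2 ih
      have hx1 : lt_ xp (t ^ n • xp) :=
        lt_pre_trans xp hxpX _ (hcone xp hxpX t0 (by linarith)) _ (hcone xp hxpX _ (htpow n))
          hxpt0 (pre_ray xp hxpX t0 (t ^ n) (by linarith) hn.le)
      exact ((hlt _ _).1 hx1).2 (hdown n)
    -- strict scaling preserved
    have lt_smul : ∀ x ∈ X, ∀ y ∈ X, ∀ t : ℝ, 0 < t → lt_ x y → lt_ (t • x) (t • y) := by
      intro x hx y hy t ht h
      obtain ⟨ha, hb⟩ := (hlt x y).1 h
      refine (hlt _ _).2 ⟨hhomo x hx y hy t ht ha, fun h2 => hb ?_⟩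
      have h3 := hhomo _ (hcone y hy t ht) _ (hcone x hx t ht) t⁻¹ (by positivity) h2
      rwa [smul_smul, smul_smul, inv_mul_cancel₀ (ne_of_gt ht), one_smul, one_smul] at h3
    -- strict monotonicity on the ray through xp
    have lt_ray_xp : ∀ q r : ℝ, 0 < q → q < r → lt_ (q • xp) (r • xp) := by
      intro q r hq hqr
      have h1 := lt_smul xp hxpX _ (hcone xp hxpX _ (div_pos (lt_trans hq hqr) hq)) q hq
        (lt_xp (r / q) ((one_lt_div hq).2 hqr))
      rwa [smul_smul, mul_div_cancel₀ _ (ne_of_gt hq)] at h1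
    -- zero is a minimum
    have pre_zero : ∀ x ∈ X, pre 0 x := by
      intro x hx
      by_contra hc
      have hlt0 : lt_ x 0 := by
        rcases hcomplete x hx 0 hzero with h1 | h1
        · exact (hlt _ _).2 ⟨h1, hc⟩
        · exact absurd h1 hc
      obtain ⟨W, hWo, hWeq⟩ := (hcont x hx).2
      have h0W : (0 : E) ∈ W := by
        have : (0:E) ∈ {z | z ∈ X ∧ lt_ x z} := ⟨hzero, hlt0⟩
        rw [hWeq] at this
        exact this.1
      have htend : Filter.Tendsto (fun s : ℝ => s • x) (nhdsWithin 0 (Set.Ioi 0)) (nhds 0) := by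
        have : Filter.Tendsto (fun s : ℝ => s • x) (nhds 0) (nhds ((0:ℝ) • x)) :=
          (continuous_id.smul continuous_const).tendsto 0
        rw [zero_smul] at this
        exact this.mono_left nhdsWithin_le_nhds
      have hev1 : ∀ᶠ s : ℝ in nhdsWithin 0 (Set.Ioi 0), (s • x) ∈ W :=
        htend (hWo.mem_nhds h0W)
      have hev2 : ∀ᶠ s : ℝ in nhdsWithin 0 (Set.Ioi 0), s ∈ Set.Ioo (0:ℝ) 1 :=
        Ioo_mem_nhdsGT_of_mem (by constructor <;> norm_num)
      obtain ⟨s, hs1, hs2⟩ := (hev1.and hev2).exists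
      have hsX : s • x ∈ X := hcone x hx s hs2.1
      have : lt_ x (s • x) := by
        have : s • x ∈ {z | z ∈ X ∧ lt_ x z} := by rw [hWeq]; exact ⟨hs1, hsX⟩
        exact this.2
      have hp : pre (s • x) x := by simpa using pre_ray x hx s 1 hs2.1 hs2.2.le
      exact ((hlt _ _).1 this).2 hp
    -- 0 is strictly below xp and all its positive multiples
    have lt_zero_xp : lt_ 0 xp := by
      by_contra hc
      have hpre : pre xp 0 := by
        by_contra h2
        exact hc ((hlt _ _).2 ⟨pre_zero xp hxpX, h2⟩)
      have h2 := hhomo xp hxpX 0 hzero t0 (by linarith)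
      rw [smul_zero] at h2
      have h3 : pre (t0 • xp) xp :=
        htrans _ (hcone xp hxpX t0 (by linarith)) 0 hzero xp hxpX (h2 hpre) (pre_zero xp hxpX)
      exact ((hlt _ _).1 hxpt0).2 h3
    have lt_zero_smul : ∀ q : ℝ, 0 < q → lt_ 0 (q • xp) := by
      intro q hq
      have := lt_smul 0 hzero xp hxpX q hq lt_zero_xp
      rwa [smul_zero] at this
    -- cofinality of the ray through xp
    have cofinal : ∀ x ∈ X, ∃ q : ℝ, 0 < q ∧ lt_ x (q • xp) := by
      intro x hx
      by_contra hc
      push_neg at hc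
      have hup : ∀ s : ℝ, 0 < s → pre xp (s • x) := by
        intro s hs
        have h1 : pre (s⁻¹ • xp) x :=
          pre_of_not_lt x hx _ (hcone xp hxpX s⁻¹ (by positivity)) (hc s⁻¹ (by positivity))
        have h2 := hhomo _ (hcone xp hxpX s⁻¹ (by positivity)) x hx s hs h1
        rwa [smul_smul, mul_inv_cancel₀ (ne_of_gt hs), one_smul] at h2
      obtain ⟨V, hVo, hVeq⟩ := (hcont xp hxpX).1
      have h0V : (0 : E) ∈ V := by
        have : (0:E) ∈ {z | z ∈ X ∧ lt_ z xp} := ⟨hzero, lt_zero_xp⟩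
        rw [hVeq] at this
        exact this.1
      have htend : Filter.Tendsto (fun s : ℝ => s • x) (nhdsWithin 0 (Set.Ioi 0)) (nhds 0) := by
        have : Filter.Tendsto (fun s : ℝ => s • x) (nhds 0) (nhds ((0:ℝ) • x)) :=
          (continuous_id.smul continuous_const).tendsto 0
        rw [zero_smul] at this
        exact this.mono_left nhdsWithin_le_nhds
      have hev1 : ∀ᶠ s : ℝ in nhdsWithin 0 (Set.Ioi 0), (s • x) ∈ V := htend (hVo.mem_nhds h0V)
      have hev2 : ∀ᶠ s : ℝ in nhdsWithin 0 (Set.Ioi 0), s ∈ Set.Ioi (0:ℝ) :=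
        self_mem_nhdsWithin
      obtain ⟨s, hs1, hs2⟩ := (hev1.and hev2).exists
      have hsX : s • x ∈ X := hcone x hx s hs2
      have : lt_ (s • x) xp := by
        have : s • x ∈ {z | z ∈ X ∧ lt_ z xp} := by rw [hVeq]; exact ⟨hs1, hsX⟩
        exact this.2
      exact ((hlt _ _).1 this).2 (hup s hs2)
    -- the utility function
    set S : E → Set ℝ := fun x => {q : ℝ | 0 < q ∧ pre x (q • xp)} with hSdef
    set u : E → ℝ := fun x => sInf (S x) with hudef
    have Sbdd : ∀ x, BddBelow (S x) := fun x => ⟨0, fun q hq => hq.1.le⟩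
    have Sne : ∀ x ∈ X, (S x).Nonempty := by
      intro x hx
      obtain ⟨q, hq, hql⟩ := cofinal x hx
      exact ⟨q, hq, ((hlt _ _).1 hql).1⟩
    have unn : ∀ x ∈ X, 0 ≤ u x := fun x hx => le_csInf (Sne x hx) (fun q hq => hq.1.le)
    have Sup : ∀ x ∈ X, ∀ q ∈ S x, ∀ r : ℝ, q ≤ r → r ∈ S x := by
      intro x hx q hq r hqr
      exact ⟨lt_of_lt_of_le hq.1 hqr, htrans x hx _ (hcone xp hxpX q hq.1) _
        (hcone xp hxpX r (lt_of_lt_of_le hq.1 hqr)) hq.2 (pre_ray xp hxpX q r hq.1 hqr)⟩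
    have mem_of_u_lt : ∀ x ∈ X, ∀ q : ℝ, u x < q → q ∈ S x := by
      intro x hx q h
      obtain ⟨q₁, hq₁, hq₁lt⟩ := exists_lt_of_csInf_lt (Sne x hx) h
      exact Sup x hx q₁ hq₁ q hq₁lt.le
    have lt_of_u_lt : ∀ x ∈ X, ∀ q : ℝ, u x < q → lt_ x (q • xp) := by
      intro x hx q h
      obtain ⟨q', hq'1, hq'2⟩ := exists_between h
      have hm := mem_of_u_lt x hx q' hq'1
      exact pre_lt_trans x hx _ (hcone xp hxpX q' hm.1) _ (hcone xp hxpX q (hm.1.trans hq'2))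
        hm.2 (lt_ray_xp q' q hm.1 hq'2)
    have u_le : ∀ x ∈ X, ∀ q : ℝ, 0 < q → pre x (q • xp) → u x ≤ q :=
      fun x hx q hq h => csInf_le (Sbdd x) ⟨hq, h⟩
    have lt_of_lt_u : ∀ x ∈ X, ∀ q : ℝ, 0 < q → q < u x → lt_ (q • xp) x := by
      intro x hx q hq h
      have hnot : ¬ pre x (q • xp) := fun hp => absurd (u_le x hx q hq hp) (not_le.2 h)
      rcases hcomplete x hx _ (hcone xp hxpX q hq) with h1 | h1
      · exact absurd h1 hnot
      · exact (hlt _ _).2 ⟨h1, hnot⟩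
    have le_u_of_lt : ∀ x ∈ X, ∀ q : ℝ, 0 < q → lt_ (q • xp) x → q ≤ u x := by
      intro x hx q hq h
      refine le_csInf (Sne x hx) (fun r hr => ?_)
      by_contra hcon
      push_neg at hcon
      exact ((hlt _ _).1 h).2 (Sup x hx r hr q hcon.le).2
    -- indifference lemmas
    have smul_xp_tendsto : ∀ c : ℝ, Filter.Tendsto (fun q : ℝ => q • xp) (nhds c) (nhds (c • xp)) :=
      fun c => (continuous_id.smul continuous_const).tendsto c
    have pre_x_zero : ∀ x ∈ X, u x = 0 → pre x 0 := by
      intro x hx hux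
      by_contra hc
      have h0x : lt_ 0 x := by
        rcases hcomplete x hx 0 hzero with h1 | h1
        · exact absurd h1 hc
        · exact (hlt _ _).2 ⟨h1, hc⟩
      obtain ⟨V, hVo, hVeq⟩ := (hcont x hx).1
      have h0V : (0 : E) ∈ V := by
        have : (0:E) ∈ {z | z ∈ X ∧ lt_ z x} := ⟨hzero, h0x⟩
        rw [hVeq] at this
        exact this.1
      have htend : Filter.Tendsto (fun q : ℝ => q • xp) (nhdsWithin 0 (Set.Ioi 0)) (nhds 0) := by
        have := smul_xp_tendsto 0
        rw [zero_smul] at this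
        exact this.mono_left nhdsWithin_le_nhds
      have hev1 : ∀ᶠ q : ℝ in nhdsWithin 0 (Set.Ioi 0), (q • xp) ∈ V := htend (hVo.mem_nhds h0V)
      have hev2 : ∀ᶠ q : ℝ in nhdsWithin 0 (Set.Ioi 0), q ∈ Set.Ioi (0:ℝ) := self_mem_nhdsWithin
      obtain ⟨q, hq1, hq2⟩ := (hev1.and hev2).exists
      have hqX : q • xp ∈ X := hcone xp hxpX q hq2
      have hql : lt_ (q • xp) x := by
        have : q • xp ∈ {z | z ∈ X ∧ lt_ z x} := by rw [hVeq]; exact ⟨hq1, hqX⟩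
        exact this.2
      have hqm : q ∈ S x := mem_of_u_lt x hx q (by rw [hux]; exact hq2)
      exact ((hlt _ _).1 hql).2 hqm.2
    have pre_ux_x : ∀ x ∈ X, 0 < u x → pre (u x • xp) x := by
      intro x hx hux
      by_contra hc
      have hxu : lt_ x (u x • xp) := by
        rcases hcomplete x hx _ (hcone xp hxpX _ hux) with h1 | h1
        · exact (hlt _ _).2 ⟨h1, hc⟩
        · exact absurd h1 hc
      obtain ⟨W, hWo, hWeq⟩ := (hcont x hx).2
      have hmem : u x • xp ∈ W := by
        have : u x • xp ∈ {z | z ∈ X ∧ lt_ x z} := ⟨hcone xp hxpX _ hux, hxu⟩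
        rw [hWeq] at this
        exact this.1
      have htend : Filter.Tendsto (fun q : ℝ => q • xp) (nhdsWithin (u x) (Set.Iio (u x)))
          (nhds (u x • xp)) := (smul_xp_tendsto (u x)).mono_left nhdsWithin_le_nhds
      have hev1 : ∀ᶠ q : ℝ in nhdsWithin (u x) (Set.Iio (u x)), (q • xp) ∈ W :=
        htend (hWo.mem_nhds hmem)
      have hev2 : ∀ᶠ q : ℝ in nhdsWithin (u x) (Set.Iio (u x)), q ∈ Set.Ioo (0:ℝ) (u x) :=
        Ioo_mem_nhdsLT_of_mem ⟨hux, le_refl _⟩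
      obtain ⟨q, hq1, hq2⟩ := (hev1.and hev2).exists
      have hqX : q • xp ∈ X := hcone xp hxpX q hq2.1
      have hql : lt_ x (q • xp) := by
        have : q • xp ∈ {z | z ∈ X ∧ lt_ x z} := by rw [hWeq]; exact ⟨hq1, hqX⟩
        exact this.2
      exact ((hlt _ _).1 hql).2 ((hlt _ _).1 (lt_of_lt_u x hx q hq2.1 hq2.2)).1
    have pre_x_ux : ∀ x ∈ X, 0 < u x → pre x (u x • xp) := by
      intro x hx hux
      by_contra hc
      have hxu : lt_ (u x • xp) x := by
        rcases hcomplete x hx _ (hcone xp hxpX _ hux) with h1 | h1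
        · exact absurd h1 hc
        · exact (hlt _ _).2 ⟨h1, hc⟩
      obtain ⟨V, hVo, hVeq⟩ := (hcont x hx).1
      have hmem : u x • xp ∈ V := by
        have : u x • xp ∈ {z | z ∈ X ∧ lt_ z x} := ⟨hcone xp hxpX _ hux, hxu⟩
        rw [hVeq] at this
        exact this.1
      have htend : Filter.Tendsto (fun q : ℝ => q • xp) (nhdsWithin (u x) (Set.Ioi (u x)))
          (nhds (u x • xp)) := (smul_xp_tendsto (u x)).mono_left nhdsWithin_le_nhds
      have hev1 : ∀ᶠ q : ℝ in nhdsWithin (u x) (Set.Ioi (u x)), (q • xp) ∈ V :=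
        htend (hVo.mem_nhds hmem)
      have hev2 : ∀ᶠ q : ℝ in nhdsWithin (u x) (Set.Ioi (u x)), q ∈ Set.Ioi (u x) :=
        self_mem_nhdsWithin
      obtain ⟨q, hq1, hq2⟩ := (hev1.and hev2).exists
      have hq0 : 0 < q := lt_trans hux hq2
      have hqX : q • xp ∈ X := hcone xp hxpX q hq0
      have hql : lt_ (q • xp) x := by
        have : q • xp ∈ {z | z ∈ X ∧ lt_ z x} := by rw [hVeq]; exact ⟨hq1, hqX⟩
        exact this.2
      exact ((hlt _ _).1 hql).2 (mem_of_u_lt x hx q hq2).2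
    -- increasing
    have hincr : ∀ x ∈ X, ∀ y ∈ X, pre x y → u x ≤ u y := by
      intro x hx y hy hxy
      exact csInf_le_csInf (Sbdd x) (Sne y hy)
        (fun q hq => ⟨hq.1, htrans x hx y hy _ (hcone xp hxpX q hq.1) hxy hq.2⟩)
    -- homogeneity
    have hhg : ∀ x ∈ X, ∀ t : ℝ, 0 < t → u (t • x) = t * u x := by
      intro x hx t ht
      have hSeq : S (t • x) = t • S x := by
        ext q
        simp only [Set.mem_smul_set, hSdef, Set.mem_setOf_eq, smul_eq_mul]
        constructor
        · rintro ⟨hq, hpq⟩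
          refine ⟨q / t, ⟨div_pos hq ht, ?_⟩, by field_simp⟩
          have h2 := hhomo _ (hcone x hx t ht) _ (hcone xp hxpX q hq) t⁻¹ (by positivity) hpq
          rw [smul_smul, smul_smul, inv_mul_cancel₀ (ne_of_gt ht), one_smul] at h2
          rwa [inv_mul_eq_div] at h2
        · rintro ⟨p, ⟨hp, hpp⟩, rfl⟩
          refine ⟨by positivity, ?_⟩
          have h2 := hhomo x hx _ (hcone xp hxpX p hp) t ht hpp
          rwa [smul_smul] at h2
      show sInf (S (t • x)) = t * sInf (S x)
      rw [hSeq, Real.sInf_smul_of_nonneg ht.le, smul_eq_mul]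
    refine ⟨u, unn, hhg, ?_, ?_, hincr, ?_⟩
    · -- subadditivity
      intro x hx y hy
      refine le_of_forall_pos_le_add fun ε hε => ?_
      obtain ⟨q, hq1, hq2⟩ := exists_rat_btwn (show u x < u x + ε/2 by linarith)
      obtain ⟨r, hr1, hr2⟩ := exists_rat_btwn (show u y < u y + ε/2 by linarith)
      have hq0 : 0 < q := by
        have : (0:ℝ) < (q:ℝ) := (unn x hx).trans_lt hq1
        exact_mod_cast this
      have hr0 : 0 < r := by
        have : (0:ℝ) < (r:ℝ) := (unn y hy).trans_lt hr1
        exact_mod_cast this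
      have l1 : lt_ x ((q:ℝ) • xp) := lt_of_u_lt x hx _ hq1
      have l2 : lt_ y ((r:ℝ) • xp) := lt_of_u_lt y hy _ hr1
      have l3 := hadd x hx y hy xp hxpXp q r hq0 hr0 l1 l2
      have l4 := u_le (x + y) (hconv x hx y hy) ((q:ℝ) + (r:ℝ))
        (by have h1 : (0:ℝ) < (q:ℝ) := by exact_mod_cast hq0
            have h2 : (0:ℝ) < (r:ℝ) := by exact_mod_cast hr0
            linarith)
        ((hlt _ _).1 l3).1
      linarith
    · -- continuity
      have rel_open : ∀ T : Set E, T ⊆ X →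
          (∀ z ∈ T, ∃ W : Set E, IsOpen W ∧ z ∈ W ∧ W ∩ X ⊆ T) →
          ∃ V : Set E, IsOpen V ∧ T = V ∩ X := by
        intro T hTX h
        choose W hWo hWz hWsub using h
        refine ⟨⋃ (z : T), W z z.2, isOpen_iUnion fun z => hWo z z.2, ?_⟩
        ext w
        simp only [Set.mem_inter_iff, Set.mem_iUnion]
        constructor
        · intro hw
          exact ⟨⟨⟨w, hw⟩, hWz w hw⟩, hTX hw⟩
        · rintro ⟨⟨z, hzW⟩, hwX⟩
          exact hWsub z z.2 ⟨hzW, hwX⟩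
      have hIoi : ∀ a : ℝ, ∃ V : Set E, IsOpen V ∧ {z | z ∈ X ∧ a < u z} = V ∩ X := by
        intro a
        rcases lt_or_ge a 0 with ha | ha
        · refine ⟨Set.univ, isOpen_univ, ?_⟩
          ext z
          simp only [Set.mem_setOf_eq, Set.univ_inter]
          exact ⟨fun h => h.1, fun h => ⟨h, lt_of_lt_of_le ha (unn z h)⟩⟩
        · refine rel_open _ (fun z hz => hz.1) ?_
          rintro z ⟨hzX, hz⟩
          obtain ⟨q, hq1, hq2⟩ := exists_between hz
          have hq0 : 0 < q := lt_of_le_of_lt ha hq1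
          have hql : lt_ (q • xp) z := lt_of_lt_u z hzX q hq0 hq2
          obtain ⟨W, hWo, hWeq⟩ := (hcont (q • xp) (hcone xp hxpX q hq0)).2
          refine ⟨W, hWo, ?_, ?_⟩
          · have : z ∈ {w | w ∈ X ∧ lt_ (q • xp) w} := ⟨hzX, hql⟩
            rw [hWeq] at this
            exact this.1
          · rintro w ⟨hwW, hwX⟩
            have : w ∈ {w | w ∈ X ∧ lt_ (q • xp) w} := by rw [hWeq]; exact ⟨hwW, hwX⟩
            exact ⟨hwX, lt_of_lt_of_le hq1 (le_u_of_lt w hwX q hq0 this.2)⟩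
      have hIio : ∀ a : ℝ, ∃ V : Set E, IsOpen V ∧ {z | z ∈ X ∧ u z < a} = V ∩ X := by
        intro a
        refine rel_open _ (fun z hz => hz.1) ?_
        rintro z ⟨hzX, hz⟩
        obtain ⟨q, hq1, hq2⟩ := exists_between hz
        have hq0 : 0 < q := lt_of_le_of_lt (unn z hzX) hq1
        have hql : lt_ z (q • xp) := lt_of_u_lt z hzX q hq1
        obtain ⟨V, hVo, hVeq⟩ := (hcont (q • xp) (hcone xp hxpX q hq0)).1
        refine ⟨V, hVo, ?_, ?_⟩
        · have : z ∈ {w | w ∈ X ∧ lt_ w (q • xp)} := ⟨hzX, hql⟩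
          rw [hVeq] at this
          exact this.1
        · rintro w ⟨hwV, hwX⟩
          have : w ∈ {w | w ∈ X ∧ lt_ w (q • xp)} := by rw [hVeq]; exact ⟨hwV, hwX⟩
          exact ⟨hwX, lt_of_le_of_lt (u_le w hwX q hq0 ((hlt _ _).1 this.2).1) hq2⟩
      rw [continuousOn_iff_continuous_restrict]
      have key : @Continuous _ _ _ (TopologicalSpace.generateFrom
          {s | ∃ a : ℝ, s = Set.Ioi a ∨ s = Set.Iio a}) (X.restrict u) := by
        refine continuous_generateFrom_iff.mpr ?_
        rintro s ⟨a, rfl | rfl⟩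
        · obtain ⟨V, hVo, hVeq⟩ := hIoi a
          have heq : X.restrict u ⁻¹' Set.Ioi a = Subtype.val ⁻¹' V := by
            ext z
            simp only [Set.restrict, Set.mem_preimage, Set.mem_Ioi]
            constructor
            · intro h
              have : (z : E) ∈ {w | w ∈ X ∧ a < u w} := ⟨z.2, h⟩
              rw [hVeq] at this
              exact this.1
            · intro h
              have : (z : E) ∈ {w | w ∈ X ∧ a < u w} := by rw [hVeq]; exact ⟨h, z.2⟩
              exact this.2
          rw [heq]
          exact hVo.preimage continuous_subtype_val
        · obtain ⟨V, hVo, hVeq⟩ := hIio a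
          have heq : X.restrict u ⁻¹' Set.Iio a = Subtype.val ⁻¹' V := by
            ext z
            simp only [Set.restrict, Set.mem_preimage, Set.mem_Iio]
            constructor
            · intro h
              have : (z : E) ∈ {w | w ∈ X ∧ u w < a} := ⟨z.2, h⟩
              rw [hVeq] at this
              exact this.1
            · intro h
              have : (z : E) ∈ {w | w ∈ X ∧ u w < a} := by rw [hVeq]; exact ⟨h, z.2⟩
              exact this.2
          rw [heq]
          exact hVo.preimage continuous_subtype_val
      rwa [show TopologicalSpace.generateFrom {s : Set ℝ | ∃ a : ℝ, s = Set.Ioi a ∨ s = Set.Iio a} =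
        Preorder.topology ℝ from rfl, ← OrderTopology.topology_eq_generate_intervals] at key
    · -- order preserving (strict part)
      intro x hx y hy hxy
      have hle : u x ≤ u y := hincr x hx y hy ((hlt _ _).1 hxy).1
      rcases lt_or_eq_of_le hle with h | h
      · exact h
      exfalso
      rcases eq_or_lt_of_le (unn y hy) with h0 | h0
      · have hy0 : pre y 0 := pre_x_zero y hy h0.symm
        exact ((hlt _ _).1 hxy).2 (htrans y hy 0 hzero x hx hy0 (pre_zero x hx))
      · have h1 : pre y (u y • xp) := pre_x_ux y hy h0
        have h2 : pre (u x • xp) x := pre_ux_x x hx (h ▸ h0)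
        rw [h] at h2
        exact ((hlt _ _).1 hxy).2
          (htrans y hy _ (hcone xp hxpX _ h0) x hx h1 h2)
end
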